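/- arXiv:2603.00713 — 6 statements merged into one kernel-verified Lean document; each statement's English description precedes it below -/
import Mathlib

section
/- Let T>0, κ≥1, M>0 and ᾱ∈(0,1], and let a, F, G satisfy: κ⁻¹ ≤ a(t,v,x) ≤ κ; |a(t,v,x)−a(t,v',x')| ≤ M(|v−v'|+|x−x'|^{1/3})^{ᾱ}; |F(t,z,u,p)| ≤ M(1+|z|+|u|+|p|); |G(z)| ≤ M; |F(t,z,u,p)−F(t,z',u',p')| ≤ M(1+|p|)(|z−z'|+|u−u'|+|p−p'|); |G(z)−G(z')| ≤ M|z−z'|. Suppose u₁ and u₂ are two continuous functions on [0,T]×ℝ², both satisfying u_i(T,·)=G, both admitting pointwise derivatives ∂_v u_i, ∂_{vv} u_i and directional derivative 𝒴u_i(t,v,x) = (d/ds)|_{s=t} u_i(s,v,x+(s−t)v) on (0,T)×ℝ², both solving a·∂_{vv}u_i + 𝒴u_i = F(t,v,x,u_i,∂_v u_i) there, and both satisfying a Lipschitz estimate |u_i(t,z)−u_i(t,z')| ≤ C|z−z'| uniformly in t for some constant C. Then u₁ = u₂ on [0,T]×ℝ². -/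
open Set

/-- Euclidean distance on `ℝ × ℝ`. -/
noncomputable def enorm2 (z z' : ℝ × ℝ) : ℝ :=
  Real.sqrt ((z.1 - z'.1) ^ 2 + (z.2 - z'.2) ^ 2)

open Filter

lemma second_deriv_nonpos_of_isLocalMax {f : ℝ → ℝ} {a : ℝ}
    (hf : ∀ x, DifferentiableAt ℝ f x)
    (hf' : DifferentiableAt ℝ (deriv f) a)
    (h : IsLocalMax f a) : deriv (deriv f) a ≤ 0 := by
  by_contra hpos
  push_neg at hpos
  have h0 : deriv f a = 0 := h.deriv_eq_zero
  have hslope := hasDerivAt_iff_tendsto_slope.1 hf'.hasDerivAt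
  have hev : ∀ᶠ x in nhdsWithin a {a}ᶜ, 0 < slope (deriv f) a x :=
    hslope.eventually (eventually_gt_nhds hpos)
  have hev2 : ∀ᶠ x in nhdsWithin a (Ioi a), 0 < slope (deriv f) a x :=
    hev.filter_mono (nhdsWithin_mono a (fun x hx => ne_of_gt hx))
  have hev3 : ∀ᶠ x in nhdsWithin a (Ioi a), 0 < deriv f x := by
    filter_upwards [hev2, self_mem_nhdsWithin] with x hx hxa
    have hxa' : (0:ℝ) < x - a := sub_pos.2 hxa
    have hsl : slope (deriv f) a x = (deriv f x - deriv f a) / (x - a) := by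
      simp [slope, div_eq_inv_mul]
    rw [hsl, h0, sub_zero] at hx
    exact (div_pos_iff.1 hx).resolve_right
      (fun hc => absurd hxa' (not_lt.2 hc.2.le)) |>.1
  have hev4 : ∀ᶠ x in nhdsWithin a (Ioi a), f x ≤ f a :=
    h.filter_mono nhdsWithin_le_nhds
  obtain ⟨b, hb, hsub⟩ := mem_nhdsGT_iff_exists_Ioc_subset.1 (hev3.and hev4)
  have hmono : StrictMonoOn f (Icc a b) := by
    apply strictMonoOn_of_deriv_pos (convex_Icc a b)
    · exact fun x _ => (hf x).continuousAt.continuousWithinAt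
    · intro x hx
      rw [interior_Icc] at hx
      exact (hsub ⟨hx.1, hx.2.le⟩).1
  have hab : a < b := hb
  have hlt := hmono (left_mem_Icc.2 hab.le) (right_mem_Icc.2 hab.le) hab
  exact absurd hlt (not_lt.2 (hsub ⟨hab, le_refl b⟩).2)

lemma abs_deriv_le_of_lip {f : ℝ → ℝ} {a C : ℝ}
    (hlip : ∀ x y : ℝ, |f x - f y| ≤ C * |x - y|)
    (hd : DifferentiableAt ℝ f a) : |deriv f a| ≤ C := by
  have hslope := hasDerivAt_iff_tendsto_slope.1 hd.hasDerivAt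
  have habs : Tendsto (fun x => |slope f a x|) (nhdsWithin a {a}ᶜ) (nhds |deriv f a|) :=
    hslope.abs
  refine le_of_tendsto habs ?_
  filter_upwards [self_mem_nhdsWithin] with x hx
  have hxa : x - a ≠ 0 := sub_ne_zero.2 hx
  have hsl : slope f a x = (f x - f a) / (x - a) := by simp [slope, div_eq_inv_mul]
  rw [hsl, abs_div, div_le_iff₀ (abs_pos.2 hxa)]
  exact hlip x a

lemma nonpos_of_forall_eps {s A C : ℝ} (hA : 0 ≤ A) (hC : 0 ≤ C)
    (h : ∀ η > (0:ℝ), s - η * A - η * C ≤ 0) : s ≤ 0 := by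
  by_contra hs
  push_neg at hs
  have hd : (0:ℝ) < A + C + 1 := by linarith
  have h1 := h (s / (2 * (A + C + 1))) (by positivity)
  have hle : s / (2 * (A + C + 1)) * A + s / (2 * (A + C + 1)) * C ≤ s / 2 := by
    rw [div_mul_eq_mul_div, div_mul_eq_mul_div, ← add_div,
      div_le_div_iff₀ (by positivity) (by norm_num)]
    nlinarith
  linarith

lemma hasDerivAt_exp_const_mul (c t : ℝ) :
    HasDerivAt (fun s => Real.exp (c * s)) (Real.exp (c * t) * c) t := by
  have h := ((hasDerivAt_id t).const_mul c).exp
  simpa using h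

lemma hasDerivAt_exp_neg_const_mul (c t : ℝ) :
    HasDerivAt (fun s => Real.exp (-(c * s))) (Real.exp (-(c * t)) * (-c)) t := by
  have h := (((hasDerivAt_id t).const_mul c).neg).exp
  simpa using h

set_option maxHeartbeats 1000000 in
lemma final_arith (κ B P E W Q lam mu dA dB dY aa Fd v x t δ ε : ℝ)
    (hκ : 1 ≤ κ) (hB : 0 ≤ B) (hP : 0 < P) (hE : 0 < E) (hε : 0 < ε) (hδ : 0 < δ)
    (ht : 0 < t) (hQ : Q = 1 + v ^ 2 + x ^ 2)
    (hlam : lam = B + 1) (hmu : mu = 2 * κ + 2 * B + 2)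
    (haa : 0 < aa) (haa2 : aa ≤ κ)
    (h1 : dA * P = ε * (E * (2 * v)))
    (h2 : dB * P - ε * (E * 2) ≤ 0)
    (h3 : dY * P + W * (P * lam) + ε * (mu * (E * Q)) - ε * (E * (2 * x * v))
        + δ * (t ^ 2)⁻¹ = 0)
    (h4 : aa * dB + dY = Fd)
    (h5 : -(B * (W + |dA|)) ≤ Fd)
    (hW : 0 < W)
    (hS : 0 < W * P - ε * (E * Q) - δ * t⁻¹) : False := by
  rw [hlam] at h3
  rw [hmu] at h3
  have hAP : |dA| * P = ε * (E * (2 * |v|)) := by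
    have h6 : |dA * P| = |ε * (E * (2 * v))| := by rw [h1]
    rw [abs_mul, abs_of_pos hP] at h6
    rw [h6, abs_mul, abs_mul, abs_mul, abs_of_pos hε, abs_of_pos hE]
    norm_num
  have hMul : (-(B * (W + |dA|))) * P ≤ Fd * P := mul_le_mul_of_nonneg_right h5 hP.le
  have hFdP : Fd * P = aa * (dB * P) + dY * P := by rw [← h4]; ring
  have step1 : aa * (dB * P) ≤ κ * (ε * (E * 2)) := by
    calc aa * (dB * P) ≤ aa * (ε * (E * 2)) := by
          apply mul_le_mul_of_nonneg_left (by linarith) haa.le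
      _ ≤ κ * (ε * (E * 2)) := by
          apply mul_le_mul_of_nonneg_right haa2 (by positivity)
  have hexp : (-(B * (W + |dA|))) * P = -(B * (W * P)) - B * (|dA| * P) := by ring
  have hAP2 : B * (|dA| * P) = B * (ε * (E * (2 * |v|))) := by rw [hAP]
  have hu : (0:ℝ) ≤ ε * E := by positivity
  have p1 : ε * E * (2 * x * v) ≤ ε * E * (v ^ 2 + x ^ 2) := by
    apply mul_le_mul_of_nonneg_left _ hu
    nlinarith [sq_nonneg (x - v)]
  have p2 : B * (ε * E) * (2 * |v|) ≤ B * (ε * E) * (1 + v ^ 2) := by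
    apply mul_le_mul_of_nonneg_left _ (by positivity)
    nlinarith [sq_nonneg (|v| - 1), sq_abs v]
  have hEQ1 : ε * (E * Q) = ε * E + ε * E * v ^ 2 + ε * E * x ^ 2 := by rw [hQ]; ring
  have hEQ2 : κ * (ε * (E * Q)) = κ * (ε * E) + κ * (ε * E * v ^ 2) + κ * (ε * E * x ^ 2) := by
    rw [hQ]; ring
  have hEQ3 : B * (ε * (E * Q)) = B * (ε * E) + B * (ε * E * v ^ 2) + B * (ε * E * x ^ 2) := by
    rw [hQ]; ring
  have hsplit3 : ε * ((2 * κ + 2 * B + 2) * (E * Q)) =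
      2 * (κ * (ε * (E * Q))) + 2 * (B * (ε * (E * Q))) + 2 * (ε * (E * Q)) := by ring
  have n1 : (0:ℝ) ≤ ε * E := hu
  have n2 : (0:ℝ) ≤ ε * E * v ^ 2 := by positivity
  have n3 : (0:ℝ) ≤ ε * E * x ^ 2 := by positivity
  have n4 : (0:ℝ) ≤ B * (ε * E) := by positivity
  have n5 : (0:ℝ) ≤ B * (ε * E * v ^ 2) := by positivity
  have n8 : (0:ℝ) ≤ B * (ε * E * x ^ 2) := by positivity
  have n6 : (0:ℝ) ≤ κ * (ε * E * v ^ 2) := mul_nonneg (by linarith) n2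
  have n7 : (0:ℝ) ≤ κ * (ε * E * x ^ 2) := mul_nonneg (by linarith) n3
  have hδt : 0 < δ * t⁻¹ := by positivity
  have hδt2 : 0 < δ * (t ^ 2)⁻¹ := by positivity
  have key1 : W * P ≤ 2 * (κ * (ε * E)) + B * (ε * E) * (2 * |v|)
      - ε * ((2 * κ + 2 * B + 2) * (E * Q)) + ε * (E * (2 * x * v)) - δ * (t ^ 2)⁻¹ := by
    linarith [hMul, hexp, hAP2, hFdP, step1, h3]
  linarith [key1, hS, p1, p2, hEQ1, hEQ2, hEQ3, hsplit3,
    n1, n2, n3, n4, n5, n6, n7, n8, hδt, hδt2]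

set_option maxHeartbeats 2000000 in
lemma one_side (T κ M : ℝ) (hT : 0 < T) (hκ : 1 ≤ κ) (hM : 0 < M)
    (a : ℝ → ℝ → ℝ → ℝ) (F : ℝ → ℝ → ℝ → ℝ → ℝ → ℝ)
    (ha1 : ∀ t ∈ Ioo (0 : ℝ) T, ∀ v x : ℝ, κ⁻¹ ≤ a t v x ∧ a t v x ≤ κ)
    (hF2 : ∀ t ∈ Ioo (0 : ℝ) T, ∀ v x v' x' uu uu' p p' : ℝ,
      |F t v x uu p - F t v' x' uu' p'| ≤
        M * (1 + |p|) * (enorm2 (v, x) (v', x') + |uu - uu'| + |p - p'|))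
    (u₁ u₂ : ℝ → ℝ → ℝ → ℝ)
    (hc₁ : ContinuousOn (fun q : ℝ × ℝ × ℝ => u₁ q.1 q.2.1 q.2.2)
      {q : ℝ × ℝ × ℝ | q.1 ∈ Icc 0 T})
    (hc₂ : ContinuousOn (fun q : ℝ × ℝ × ℝ => u₂ q.1 q.2.1 q.2.2)
      {q : ℝ × ℝ × ℝ | q.1 ∈ Icc 0 T})
    (hterm : ∀ v x : ℝ, u₁ T v x = u₂ T v x)
    (hsol₁ : ∀ t ∈ Ioo (0 : ℝ) T, ∀ v x : ℝ,
      DifferentiableAt ℝ (fun w => u₁ t w x) v ∧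
      DifferentiableAt ℝ (fun w => deriv (fun w' => u₁ t w' x) w) v ∧
      DifferentiableAt ℝ (fun s => u₁ s v (x + (s - t) * v)) t ∧
      a t v x * deriv (fun w => deriv (fun w' => u₁ t w' x) w) v
          + deriv (fun s => u₁ s v (x + (s - t) * v)) t
        = F t v x (u₁ t v x) (deriv (fun w => u₁ t w x) v))
    (hsol₂ : ∀ t ∈ Ioo (0 : ℝ) T, ∀ v x : ℝ,
      DifferentiableAt ℝ (fun w => u₂ t w x) v ∧
      DifferentiableAt ℝ (fun w => deriv (fun w' => u₂ t w' x) w) v ∧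
      DifferentiableAt ℝ (fun s => u₂ s v (x + (s - t) * v)) t ∧
      a t v x * deriv (fun w => deriv (fun w' => u₂ t w' x) w) v
          + deriv (fun s => u₂ s v (x + (s - t) * v)) t
        = F t v x (u₂ t v x) (deriv (fun w => u₂ t w x) v))
    (C₁ C₂ : ℝ) (hC₁ : 0 ≤ C₁) (hC₂ : 0 ≤ C₂)
    (hLip₁ : ∀ t ∈ Icc (0 : ℝ) T, ∀ v x v' x' : ℝ,
      |u₁ t v x - u₁ t v' x'| ≤ C₁ * enorm2 (v, x) (v', x'))
    (hLip₂ : ∀ t ∈ Icc (0 : ℝ) T, ∀ v x v' x' : ℝ,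
      |u₂ t v x - u₂ t v' x'| ≤ C₂ * enorm2 (v, x) (v', x')) :
    ∀ t ∈ Ioc (0 : ℝ) T, ∀ v x : ℝ, u₁ t v x ≤ u₂ t v x := by
  have hκ0 : (0:ℝ) < κ := lt_of_lt_of_le one_pos hκ
  set B : ℝ := M * (1 + C₁) with hBdef
  have hB : 0 ≤ B := by positivity
  set lam : ℝ := B + 1 with hlamdef
  set mu : ℝ := 2 * κ + 2 * B + 2 with hmudef
  have hlam0 : (0:ℝ) ≤ lam := by rw [hlamdef]; linarith
  have hmu0 : (0:ℝ) ≤ mu := by rw [hmudef]; linarith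
  -- bound on the difference along the v = x = 0 line
  obtain ⟨K₀, hK₀0, hK₀⟩ : ∃ K₀ : ℝ, 0 ≤ K₀ ∧ ∀ s ∈ Icc (0:ℝ) T,
      |u₁ s 0 0 - u₂ s 0 0| ≤ K₀ := by
    have hcw : ContinuousOn (fun s : ℝ => u₁ s 0 0 - u₂ s 0 0) (Icc 0 T) := by
      have hmap : ∀ s ∈ Icc (0:ℝ) T,
          (fun s : ℝ => (s, (0:ℝ), (0:ℝ))) s ∈ {q : ℝ × ℝ × ℝ | q.1 ∈ Icc 0 T} :=
        fun s hs => hs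
      have hco : Continuous (fun s : ℝ => (s, (0:ℝ), (0:ℝ))) := by continuity
      exact (hc₁.comp hco.continuousOn hmap).sub (hc₂.comp hco.continuousOn hmap)
    obtain ⟨K, hK⟩ := isCompact_Icc.exists_bound_of_continuousOn hcw
    refine ⟨max K 0, le_max_right _ _, fun s hs => ?_⟩
    have := hK s hs
    rw [Real.norm_eq_abs] at this
    exact le_trans this (le_max_left _ _)
  -- linear growth of the difference
  have hgrow : ∀ t ∈ Icc (0:ℝ) T, ∀ v x : ℝ,
      |u₁ t v x - u₂ t v x| ≤ K₀ + (C₁ + C₂) * Real.sqrt (v ^ 2 + x ^ 2) := by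
    intro t ht v x
    have h1 := hLip₁ t ht v x 0 0
    have h2 := hLip₂ t ht v x 0 0
    have he : enorm2 (v, x) ((0:ℝ), (0:ℝ)) = Real.sqrt (v ^ 2 + x ^ 2) := by
      simp [enorm2]
    rw [he] at h1 h2
    have h3 := hK₀ t ht
    have h4 : |u₁ t v x - u₂ t v x| ≤ |u₁ t v x - u₁ t 0 0| + |u₁ t 0 0 - u₂ t 0 0|
        + |u₂ t 0 0 - u₂ t v x| := by
      have := abs_sub_le (u₁ t v x) (u₁ t 0 0) (u₂ t v x)
      have h5 := abs_sub_le (u₁ t 0 0) (u₂ t 0 0) (u₂ t v x)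
      linarith
    rw [abs_sub_comm (u₂ t 0 0)] at h4
    linarith
  -- the key claim
  have key : ∀ ε > (0:ℝ), ∀ δ > (0:ℝ), ∀ t ∈ Ioc (0:ℝ) T, ∀ v x : ℝ,
      (u₁ t v x - u₂ t v x) * Real.exp (lam * t)
        - ε * (Real.exp (-(mu * t)) * (1 + v ^ 2 + x ^ 2)) - δ * t⁻¹ ≤ 0 := by
    intro ε hε δ hδ
    by_contra hcon
    push_neg at hcon
    obtain ⟨ta, hta, va, xa, hpos⟩ := hcon
    set g : ℝ × ℝ × ℝ → ℝ := fun q =>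
      (u₁ q.1 q.2.1 q.2.2 - u₂ q.1 q.2.1 q.2.2) * Real.exp (lam * q.1)
        - ε * (Real.exp (-(mu * q.1)) * (1 + q.2.1 ^ 2 + q.2.2 ^ 2)) - δ * q.1⁻¹
      with hgdef
    have hpos' : 0 < g (ta, va, xa) := hpos
    set c1 : ℝ := Real.exp (lam * T) * K₀ with hc1def
    set c2 : ℝ := Real.exp (lam * T) * (C₁ + C₂) with hc2def
    have hc10 : 0 ≤ c1 := mul_nonneg (Real.exp_pos _).le hK₀0
    have hc20 : 0 ≤ c2 := mul_nonneg (Real.exp_pos _).le (by linarith)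
    set ep : ℝ := ε * Real.exp (-(mu * T)) with hepdef
    have hep : 0 < ep := mul_pos hε (Real.exp_pos _)
    set r : ℝ := max 1 ((c1 + c2) / ep + 1) with hrdef
    have hr1 : (1:ℝ) ≤ r := le_max_left _ _
    set dd : ℝ := c1 + c2 * r + 1 with hdddef
    have hdd : 0 < dd := by
      have : 0 ≤ c2 * r := mul_nonneg hc20 (by linarith)
      rw [hdddef]; linarith
    set t₁ : ℝ := δ / dd with ht₁def
    have ht₁ : 0 < t₁ := div_pos hδ hdd
    -- membership claim
    have hmem : ∀ s ∈ Ioc (0:ℝ) T, ∀ w y : ℝ, 0 < g (s, w, y) →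
        t₁ ≤ s ∧ |w| ≤ r ∧ |y| ≤ r := by
      intro s hs w y hg
      have hg' : 0 < (u₁ s w y - u₂ s w y) * Real.exp (lam * s)
          - ε * (Real.exp (-(mu * s)) * (1 + w ^ 2 + y ^ 2)) - δ * s⁻¹ := hg
      have hL0 : 0 ≤ Real.sqrt (w ^ 2 + y ^ 2) := Real.sqrt_nonneg _
      set L : ℝ := Real.sqrt (w ^ 2 + y ^ 2) with hLdef
      have hL2 : L ^ 2 = w ^ 2 + y ^ 2 := Real.sq_sqrt (by positivity)
      have hsI : s ∈ Icc (0:ℝ) T := ⟨hs.1.le, hs.2⟩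
      have hwb : (u₁ s w y - u₂ s w y) * Real.exp (lam * s) ≤ c1 + c2 * L := by
        have h1 := hgrow s hsI w y
        have h2 : Real.exp (lam * s) ≤ Real.exp (lam * T) :=
          Real.exp_le_exp.2 (mul_le_mul_of_nonneg_left hs.2 hlam0)
        have h0 : (0:ℝ) ≤ K₀ + (C₁ + C₂) * L :=
          add_nonneg hK₀0 (mul_nonneg (by linarith) hL0)
        calc (u₁ s w y - u₂ s w y) * Real.exp (lam * s)
            ≤ (K₀ + (C₁ + C₂) * L) * Real.exp (lam * s) := by
              apply mul_le_mul_of_nonneg_right _ (Real.exp_pos _).le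
              exact le_trans (le_abs_self _) h1
          _ ≤ (K₀ + (C₁ + C₂) * L) * Real.exp (lam * T) :=
              mul_le_mul_of_nonneg_left h2 h0
          _ = c1 + c2 * L := by rw [hc1def, hc2def]; ring
      have hpsi : ep * (1 + L ^ 2) ≤ ε * (Real.exp (-(mu * s)) * (1 + w ^ 2 + y ^ 2)) := by
        have h2 : Real.exp (-(mu * T)) ≤ Real.exp (-(mu * s)) :=
          Real.exp_le_exp.2 (neg_le_neg (mul_le_mul_of_nonneg_left hs.2 hmu0))
        have hQ0 : (0:ℝ) ≤ 1 + w ^ 2 + y ^ 2 := by positivity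
        calc ep * (1 + L ^ 2) = ε * (Real.exp (-(mu * T)) * (1 + w ^ 2 + y ^ 2)) := by
              rw [hL2, hepdef]; ring
          _ ≤ ε * (Real.exp (-(mu * s)) * (1 + w ^ 2 + y ^ 2)) :=
              mul_le_mul_of_nonneg_left (mul_le_mul_of_nonneg_right h2 hQ0) hε.le
      have hst : 0 < δ * s⁻¹ := by
        have := hs.1
        positivity
      have hmain : 0 < c1 + c2 * L - ep * (1 + L ^ 2) - δ * s⁻¹ := by linarith
      have hLr : L ≤ r := by
        by_contra hLr'
        push_neg at hLr'
        have h1r : 1 < L := lt_of_le_of_lt hr1 hLr'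
        have h2r : (c1 + c2) / ep + 1 < L := lt_of_le_of_lt (le_max_right _ _) hLr'
        have h3r : c1 + c2 < ep * (L - 1) := by
          have := (div_lt_iff₀ hep).1 (show (c1 + c2) / ep < L - 1 by linarith)
          linarith [this]
        have q1 : c1 * 1 ≤ c1 * L := mul_le_mul_of_nonneg_left h1r.le hc10
        have q2 : (c1 + c2) * L < (ep * (L - 1)) * L :=
          mul_lt_mul_of_pos_right h3r (by linarith)
        have q3 : 0 < ep * L := mul_pos hep (by linarith)
        linarith [hmain, hst, q1, q2, q3, hep]
      have hwL : |w| ≤ L := by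
        have h6 := Real.sqrt_le_sqrt (show w ^ 2 ≤ w ^ 2 + y ^ 2 by nlinarith [sq_nonneg y])
        rwa [Real.sqrt_sq_eq_abs] at h6
      have hyL : |y| ≤ L := by
        have h6 := Real.sqrt_le_sqrt (show y ^ 2 ≤ w ^ 2 + y ^ 2 by nlinarith [sq_nonneg w])
        rwa [Real.sqrt_sq_eq_abs] at h6
      have hepl : 0 ≤ ep * (1 + L ^ 2) := mul_nonneg hep.le (by positivity)
      have h4 : δ * s⁻¹ < dd := by
        have h5 : c2 * L ≤ c2 * r := mul_le_mul_of_nonneg_left hLr hc20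
        rw [hdddef]
        linarith
      have h5 : δ < dd * s := by
        have h6 := mul_lt_mul_of_pos_right h4 hs.1
        rwa [mul_assoc, inv_mul_cancel₀ (ne_of_gt hs.1), mul_one] at h6
      refine ⟨?_, le_trans hwL hLr, le_trans hyL hLr⟩
      rw [ht₁def, div_le_iff₀ hdd]
      linarith
    -- compact set containing all positivity points
    set K : Set (ℝ × ℝ × ℝ) := Icc t₁ T ×ˢ (Icc (-r) r ×ˢ Icc (-r) r) with hKdef
    have hKc : IsCompact K := isCompact_Icc.prod (isCompact_Icc.prod isCompact_Icc)
    have hKsub : K ⊆ {q : ℝ × ℝ × ℝ | q.1 ∈ Icc 0 T} :=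
      fun q hq => ⟨le_trans ht₁.le hq.1.1, hq.1.2⟩
    have hgc : ContinuousOn g K := by
      rw [hgdef]
      apply ContinuousOn.sub
      apply ContinuousOn.sub
      · exact ((hc₁.mono hKsub).sub (hc₂.mono hKsub)).mul
          (Real.continuous_exp.comp (continuous_const.mul continuous_fst)).continuousOn
      · apply Continuous.continuousOn
        fun_prop
      · exact continuousOn_const.mul (ContinuousOn.inv₀ continuous_fst.continuousOn
          (fun q hq => ne_of_gt (lt_of_lt_of_le ht₁ hq.1.1)))
    have hq0K : (ta, va, xa) ∈ K := by
      obtain ⟨m1, m2, m3⟩ := hmem ta hta va xa hpos'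
      exact ⟨⟨m1, hta.2⟩, ⟨(abs_le.1 m2).1, (abs_le.1 m2).2⟩, ⟨(abs_le.1 m3).1, (abs_le.1 m3).2⟩⟩
    obtain ⟨qs, hqsK, hqsmax'⟩ := hKc.exists_isMaxOn ⟨(ta, va, xa), hq0K⟩ hgc
    have hqmax : ∀ q ∈ K, g q ≤ g qs := isMaxOn_iff.1 hqsmax'
    obtain ⟨t, v, x⟩ := qs
    have hS : 0 < g (t, v, x) := lt_of_lt_of_le hpos' (hqmax _ hq0K)
    have hglob : ∀ s ∈ Ioc (0:ℝ) T, ∀ w y : ℝ, g (s, w, y) ≤ g (t, v, x) := by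
      intro s hs w y
      by_cases h : 0 < g (s, w, y)
      · obtain ⟨m1, m2, m3⟩ := hmem s hs w y h
        exact hqmax _ ⟨⟨m1, hs.2⟩, ⟨(abs_le.1 m2).1, (abs_le.1 m2).2⟩,
          ⟨(abs_le.1 m3).1, (abs_le.1 m3).2⟩⟩
      · push_neg at h
        linarith
    have ht1T : t ∈ Icc t₁ T := hqsK.1
    have ht0 : 0 < t := lt_of_lt_of_le ht₁ ht1T.1
    have htT : t < T := by
      rcases lt_or_eq_of_le ht1T.2 with h | h
      · exact h
      · exfalso
        have e0 : u₁ T v x - u₂ T v x = 0 := by rw [hterm]; ring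
        have hgT : g (T, v, x) = -(ε * (Real.exp (-(mu * T)) * (1 + v ^ 2 + x ^ 2)))
            - δ * T⁻¹ := by
          show (u₁ T v x - u₂ T v x) * Real.exp (lam * T)
              - ε * (Real.exp (-(mu * T)) * (1 + v ^ 2 + x ^ 2)) - δ * T⁻¹ = _
          rw [e0]; ring
        have hp1 : 0 < ε * (Real.exp (-(mu * T)) * (1 + v ^ 2 + x ^ 2)) := by positivity
        have hp2 : 0 < δ * T⁻¹ := by positivity
        rw [h] at hS
        rw [hgT] at hS
        linarith
    have htIoo : t ∈ Ioo (0:ℝ) T := ⟨ht0, htT⟩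
    obtain ⟨hd1₁, hd2₁, hdy₁, heq₁⟩ := hsol₁ t htIoo v x
    obtain ⟨hd1₂, hd2₂, hdy₂, heq₂⟩ := hsol₂ t htIoo v x
    -- v-direction derivative of g at arbitrary point
    have hgv : ∀ w : ℝ, HasDerivAt (fun z => g (t, z, x))
        ((deriv (fun w' => u₁ t w' x) w - deriv (fun w' => u₂ t w' x) w) * Real.exp (lam * t)
          - ε * (Real.exp (-(mu * t)) * (2 * w))) w := by
      intro w
      obtain ⟨hda, -, -, -⟩ := hsol₁ t htIoo w x
      obtain ⟨hdb, -, -, -⟩ := hsol₂ t htIoo w x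
      have h1 := hda.hasDerivAt.sub hdb.hasDerivAt
      have h2 := h1.mul_const (Real.exp (lam * t))
      have h3 : HasDerivAt (fun z : ℝ => ε * (Real.exp (-(mu * t)) * (1 + z ^ 2 + x ^ 2)))
          (ε * (Real.exp (-(mu * t)) * (2 * w))) w := by
        have h4 := HasDerivAt.const_mul ε (HasDerivAt.const_mul (Real.exp (-(mu * t)))
          (((hasDerivAt_pow 2 w).const_add 1).add_const (x ^ 2)))
        refine h4.congr_deriv ?_
        push_cast
        ring
      exact (h2.sub h3).sub_const (δ * t⁻¹)
    have hmaxv : IsLocalMax (fun z => g (t, z, x)) v := by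
      apply Filter.Eventually.of_forall
      intro z
      exact hglob t ⟨ht0, htT.le⟩ z x
    have hv1 : (deriv (fun w' => u₁ t w' x) v - deriv (fun w' => u₂ t w' x) v)
          * Real.exp (lam * t) - ε * (Real.exp (-(mu * t)) * (2 * v)) = 0 :=
      hmaxv.hasDerivAt_eq_zero (hgv v)
    have hderiv_eq : deriv (fun z => g (t, z, x)) = fun w =>
        (deriv (fun w' => u₁ t w' x) w - deriv (fun w' => u₂ t w' x) w) * Real.exp (lam * t)
          - ε * (Real.exp (-(mu * t)) * (2 * w)) := funext fun w => (hgv w).deriv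
    have hdf : ∀ w, DifferentiableAt ℝ (fun z => g (t, z, x)) w :=
      fun w => (hgv w).differentiableAt
    have hdf2 : DifferentiableAt ℝ (deriv (fun z => g (t, z, x))) v := by
      rw [hderiv_eq]
      apply DifferentiableAt.sub
      · exact (hd2₁.sub hd2₂).mul_const _
      · fun_prop
    have hsec := second_deriv_nonpos_of_isLocalMax hdf hdf2 hmaxv
    have hder2 : deriv (deriv (fun z => g (t, z, x))) v =
        (deriv (fun w => deriv (fun w' => u₁ t w' x) w) v
          - deriv (fun w => deriv (fun w' => u₂ t w' x) w) v) * Real.exp (lam * t)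
          - ε * (Real.exp (-(mu * t)) * 2) := by
      rw [hderiv_eq]
      have h8 : HasDerivAt (fun w : ℝ => ε * (Real.exp (-(mu * t)) * (2 * w)))
          (ε * (Real.exp (-(mu * t)) * 2)) v := by
        have h9 := HasDerivAt.const_mul ε (HasDerivAt.const_mul (Real.exp (-(mu * t)))
          (HasDerivAt.const_mul 2 (hasDerivAt_id v)))
        refine h9.congr_deriv ?_
        ring
      exact (((hd2₁.hasDerivAt.sub hd2₂.hasDerivAt).mul_const (Real.exp (lam * t))).sub h8).deriv
    rw [hder2] at hsec
    -- time-direction derivative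
    have hxt : x + (t - t) * v = x := by ring
    have hmaxt : IsLocalMax (fun s => g (s, v, x + (s - t) * v)) t := by
      filter_upwards [isOpen_Ioo.mem_nhds htIoo] with s hs
      show g (s, v, x + (s - t) * v) ≤ g (t, v, x + (t - t) * v)
      rw [hxt]
      exact hglob s ⟨hs.1, hs.2.le⟩ v (x + (s - t) * v)
    have hA' := hdy₁.hasDerivAt.sub hdy₂.hasDerivAt
    have hprod := hA'.mul (hasDerivAt_exp_const_mul lam t)
    have hlin : HasDerivAt (fun s => x + (s - t) * v) v t := by
      have h := (((hasDerivAt_id t).sub_const t).mul_const v).const_add x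
      simpa using h
    have hsq := hlin.pow 2
    rw [hxt] at hsq
    have hQ' := hsq.const_add (1 + v ^ 2)
    have hψ := HasDerivAt.const_mul ε ((hasDerivAt_exp_neg_const_mul mu t).mul hQ')
    have hδ' := (hasDerivAt_inv (ne_of_gt ht0)).const_mul δ
    have htot := (hprod.sub hψ).sub hδ'
    have hv3'' := hmaxt.hasDerivAt_eq_zero htot
    simp only [Pi.sub_apply, Pi.pow_apply, hxt] at hv3''
    have hv3 : (deriv (fun s => u₁ s v (x + (s - t) * v)) t
          - deriv (fun s => u₂ s v (x + (s - t) * v)) t) * Real.exp (lam * t)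
        + (u₁ t v x - u₂ t v x) * (Real.exp (lam * t) * lam)
        + ε * (mu * (Real.exp (-(mu * t)) * (1 + v ^ 2 + x ^ 2)))
        - ε * (Real.exp (-(mu * t)) * (2 * x * v)) + δ * (t ^ 2)⁻¹ = 0 := by
      push_cast at hv3''
      linear_combination hv3''
    -- equation difference
    have heqd : a t v x * (deriv (fun w => deriv (fun w' => u₁ t w' x) w) v
          - deriv (fun w => deriv (fun w' => u₂ t w' x) w) v)
        + (deriv (fun s => u₁ s v (x + (s - t) * v)) t
          - deriv (fun s => u₂ s v (x + (s - t) * v)) t)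
        = F t v x (u₁ t v x) (deriv (fun w => u₁ t w x) v)
          - F t v x (u₂ t v x) (deriv (fun w => u₂ t w x) v) := by
      linear_combination heq₁ - heq₂
    -- bound on |∂_v u₁|
    have hA1b : |deriv (fun w => u₁ t w x) v| ≤ C₁ := by
      apply abs_deriv_le_of_lip _ hd1₁
      intro y z
      have h := hLip₁ t ⟨ht0.le, htT.le⟩ y x z x
      rwa [show enorm2 (y, x) (z, x) = |y - z| from by simp [enorm2, Real.sqrt_sq_eq_abs]] at h
    -- positivity of the difference at the max point
    have hSex : 0 < (u₁ t v x - u₂ t v x) * Real.exp (lam * t)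
        - ε * (Real.exp (-(mu * t)) * (1 + v ^ 2 + x ^ 2)) - δ * t⁻¹ := hS
    have hW : 0 < u₁ t v x - u₂ t v x := by
      by_contra hc'
      push_neg at hc'
      have h1 := mul_nonneg (neg_nonneg.2 hc') (Real.exp_pos (lam * t)).le
      have hp1 : 0 < ε * (Real.exp (-(mu * t)) * (1 + v ^ 2 + x ^ 2)) := by positivity
      have hp2 : 0 < δ * t⁻¹ := by positivity
      linarith [hSex, h1, hp1, hp2]
    -- F-difference bound
    have hFd := hF2 t htIoo v x v x (u₁ t v x) (u₂ t v x)
      (deriv (fun w => u₁ t w x) v) (deriv (fun w => u₂ t w x) v)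
    have hself : enorm2 ((v:ℝ), (x:ℝ)) (v, x) = 0 := by simp [enorm2]
    have hFb : -(B * ((u₁ t v x - u₂ t v x)
          + |deriv (fun w => u₁ t w x) v - deriv (fun w => u₂ t w x) v|))
        ≤ F t v x (u₁ t v x) (deriv (fun w => u₁ t w x) v)
          - F t v x (u₂ t v x) (deriv (fun w => u₂ t w x) v) := by
      have hX : (0:ℝ) ≤ (u₁ t v x - u₂ t v x)
          + |deriv (fun w => u₁ t w x) v - deriv (fun w => u₂ t w x) v| :=
        add_nonneg hW.le (abs_nonneg _)
      have h1 : M * (1 + |deriv (fun w => u₁ t w x) v|) ≤ B := by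
        rw [hBdef]
        apply mul_le_mul_of_nonneg_left _ hM.le
        linarith
      have habs : |F t v x (u₁ t v x) (deriv (fun w => u₁ t w x) v)
          - F t v x (u₂ t v x) (deriv (fun w => u₂ t w x) v)|
          ≤ B * ((u₁ t v x - u₂ t v x)
            + |deriv (fun w => u₁ t w x) v - deriv (fun w => u₂ t w x) v|) := by
        calc |F t v x (u₁ t v x) (deriv (fun w => u₁ t w x) v)
            - F t v x (u₂ t v x) (deriv (fun w => u₂ t w x) v)|
            ≤ M * (1 + |deriv (fun w => u₁ t w x) v|) * (enorm2 (v, x) (v, x)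
              + |u₁ t v x - u₂ t v x|
              + |deriv (fun w => u₁ t w x) v - deriv (fun w => u₂ t w x) v|) := hFd
          _ = M * (1 + |deriv (fun w => u₁ t w x) v|) * ((u₁ t v x - u₂ t v x)
              + |deriv (fun w => u₁ t w x) v - deriv (fun w => u₂ t w x) v|) := by
              rw [hself, abs_of_pos hW]; ring
          _ ≤ B * ((u₁ t v x - u₂ t v x)
              + |deriv (fun w => u₁ t w x) v - deriv (fun w => u₂ t w x) v|) :=
              mul_le_mul_of_nonneg_right h1 hX
      calc -(B * ((u₁ t v x - u₂ t v x)
            + |deriv (fun w => u₁ t w x) v - deriv (fun w => u₂ t w x) v|))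
          ≤ -|F t v x (u₁ t v x) (deriv (fun w => u₁ t w x) v)
            - F t v x (u₂ t v x) (deriv (fun w => u₂ t w x) v)| := neg_le_neg habs
        _ ≤ _ := neg_abs_le _
    obtain ⟨hainv, haκ⟩ := ha1 t htIoo v x
    have haa0 : 0 < a t v x := lt_of_lt_of_le (inv_pos.2 hκ0) hainv
    have hv1' : (deriv (fun w => u₁ t w x) v - deriv (fun w => u₂ t w x) v)
        * Real.exp (lam * t) = ε * (Real.exp (-(mu * t)) * (2 * v)) := by linarith [hv1]
    have hv2' : (deriv (fun w => deriv (fun w' => u₁ t w' x) w) v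
          - deriv (fun w => deriv (fun w' => u₂ t w' x) w) v) * Real.exp (lam * t)
        - ε * (Real.exp (-(mu * t)) * 2) ≤ 0 := hsec
    exact final_arith κ B (Real.exp (lam * t)) (Real.exp (-(mu * t)))
      (u₁ t v x - u₂ t v x) (1 + v ^ 2 + x ^ 2) lam mu
      (deriv (fun w => u₁ t w x) v - deriv (fun w => u₂ t w x) v)
      (deriv (fun w => deriv (fun w' => u₁ t w' x) w) v
        - deriv (fun w => deriv (fun w' => u₂ t w' x) w) v)
      (deriv (fun s => u₁ s v (x + (s - t) * v)) t
        - deriv (fun s => u₂ s v (x + (s - t) * v)) t)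
      (a t v x)
      (F t v x (u₁ t v x) (deriv (fun w => u₁ t w x) v)
        - F t v x (u₂ t v x) (deriv (fun w => u₂ t w x) v))
      v x t δ ε hκ hB (Real.exp_pos _) (Real.exp_pos _) hε hδ ht0 rfl hlamdef hmudef
      haa0 haκ hv1' hv2' hv3 heqd hFb hW hSex
  -- conclusion from the key claim
  intro t ht v x
  have hP := Real.exp_pos (lam * t)
  have hQ0 : (0:ℝ) ≤ Real.exp (-(mu * t)) * (1 + v ^ 2 + x ^ 2) := by positivity
  have ht0 : 0 < t := ht.1
  have hti : (0:ℝ) ≤ t⁻¹ := (inv_pos.2 ht0).le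
  have hle : (u₁ t v x - u₂ t v x) * Real.exp (lam * t) ≤ 0 := by
    apply nonpos_of_forall_eps hQ0 hti
    intro η hη
    have := key η hη η hη t ht v x
    linarith
  by_contra hc
  push_neg at hc
  have := mul_pos (sub_pos.2 hc) hP
  linarith

/-- Uniqueness of classical solutions to the semilinear kinetic (Langevin)
Cauchy problem `a ∂_vv u + 𝒴u = F(t,v,x,u,∂_v u)`, `u(T,·) = G`, within the class
of continuous solutions that are Lipschitz in space uniformly in time. -/
theorem stmt1
    (T κ M ab : ℝ) (hT : 0 < T) (hκ : 1 ≤ κ) (hM : 0 < M)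
    (hab : ab ∈ Set.Ioc (0 : ℝ) 1)
    (a : ℝ → ℝ → ℝ → ℝ) (F : ℝ → ℝ → ℝ → ℝ → ℝ → ℝ) (G : ℝ → ℝ → ℝ)
    (ha1 : ∀ t ∈ Ioo (0 : ℝ) T, ∀ v x : ℝ, κ⁻¹ ≤ a t v x ∧ a t v x ≤ κ)
    (ha2 : ∀ t ∈ Ioo (0 : ℝ) T, ∀ v x v' x' : ℝ,
      |a t v x - a t v' x'| ≤ M * (|v - v'| + |x - x'| ^ ((1 : ℝ) / 3)) ^ ab)
    (hF1 : ∀ t ∈ Ioo (0 : ℝ) T, ∀ v x uu p : ℝ,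
      |F t v x uu p| ≤ M * (1 + enorm2 (v, x) 0 + |uu| + |p|))
    (hG1 : ∀ v x : ℝ, |G v x| ≤ M)
    (hF2 : ∀ t ∈ Ioo (0 : ℝ) T, ∀ v x v' x' uu uu' p p' : ℝ,
      |F t v x uu p - F t v' x' uu' p'| ≤
        M * (1 + |p|) * (enorm2 (v, x) (v', x') + |uu - uu'| + |p - p'|))
    (hG2 : ∀ v x v' x' : ℝ, |G v x - G v' x'| ≤ M * enorm2 (v, x) (v', x'))
    (u₁ u₂ : ℝ → ℝ → ℝ → ℝ)
    (hc₁ : ContinuousOn (fun q : ℝ × ℝ × ℝ => u₁ q.1 q.2.1 q.2.2)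
      {q : ℝ × ℝ × ℝ | q.1 ∈ Icc 0 T})
    (hc₂ : ContinuousOn (fun q : ℝ × ℝ × ℝ => u₂ q.1 q.2.1 q.2.2)
      {q : ℝ × ℝ × ℝ | q.1 ∈ Icc 0 T})
    (hterm₁ : ∀ v x : ℝ, u₁ T v x = G v x)
    (hterm₂ : ∀ v x : ℝ, u₂ T v x = G v x)
    (hsol₁ : ∀ t ∈ Ioo (0 : ℝ) T, ∀ v x : ℝ,
      DifferentiableAt ℝ (fun w => u₁ t w x) v ∧
      DifferentiableAt ℝ (fun w => deriv (fun w' => u₁ t w' x) w) v ∧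
      DifferentiableAt ℝ (fun s => u₁ s v (x + (s - t) * v)) t ∧
      a t v x * deriv (fun w => deriv (fun w' => u₁ t w' x) w) v
          + deriv (fun s => u₁ s v (x + (s - t) * v)) t
        = F t v x (u₁ t v x) (deriv (fun w => u₁ t w x) v))
    (hsol₂ : ∀ t ∈ Ioo (0 : ℝ) T, ∀ v x : ℝ,
      DifferentiableAt ℝ (fun w => u₂ t w x) v ∧
      DifferentiableAt ℝ (fun w => deriv (fun w' => u₂ t w' x) w) v ∧
      DifferentiableAt ℝ (fun s => u₂ s v (x + (s - t) * v)) t ∧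
      a t v x * deriv (fun w => deriv (fun w' => u₂ t w' x) w) v
          + deriv (fun s => u₂ s v (x + (s - t) * v)) t
        = F t v x (u₂ t v x) (deriv (fun w => u₂ t w x) v))
    (hLip₁ : ∃ C : ℝ, ∀ t ∈ Icc (0 : ℝ) T, ∀ v x v' x' : ℝ,
      |u₁ t v x - u₁ t v' x'| ≤ C * enorm2 (v, x) (v', x'))
    (hLip₂ : ∃ C : ℝ, ∀ t ∈ Icc (0 : ℝ) T, ∀ v x v' x' : ℝ,
      |u₂ t v x - u₂ t v' x'| ≤ C * enorm2 (v, x) (v', x')) :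
    ∀ t ∈ Icc (0 : ℝ) T, ∀ v x : ℝ, u₁ t v x = u₂ t v x := by
  obtain ⟨C₁, hLip₁'⟩ := hLip₁
  obtain ⟨C₂, hLip₂'⟩ := hLip₂
  have hL1 : ∀ t ∈ Icc (0 : ℝ) T, ∀ v x v' x' : ℝ,
      |u₁ t v x - u₁ t v' x'| ≤ max C₁ 0 * enorm2 (v, x) (v', x') := by
    intro t ht v x v' x'
    exact le_trans (hLip₁' t ht v x v' x')
      (mul_le_mul_of_nonneg_right (le_max_left _ _) (Real.sqrt_nonneg _))
  have hL2 : ∀ t ∈ Icc (0 : ℝ) T, ∀ v x v' x' : ℝ,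
      |u₂ t v x - u₂ t v' x'| ≤ max C₂ 0 * enorm2 (v, x) (v', x') := by
    intro t ht v x v' x'
    exact le_trans (hLip₂' t ht v x v' x')
      (mul_le_mul_of_nonneg_right (le_max_left _ _) (Real.sqrt_nonneg _))
  have hterm : ∀ v x : ℝ, u₁ T v x = u₂ T v x := by
    intro v x; rw [hterm₁, hterm₂]
  have h12 := one_side T κ M hT hκ hM a F ha1 hF2 u₁ u₂ hc₁ hc₂ hterm hsol₁ hsol₂
    (max C₁ 0) (max C₂ 0) (le_max_right _ _) (le_max_right _ _) hL1 hL2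
  have h21 := one_side T κ M hT hκ hM a F ha1 hF2 u₂ u₁ hc₂ hc₁
    (fun v x => (hterm v x).symm) hsol₂ hsol₁
    (max C₂ 0) (max C₁ 0) (le_max_right _ _) (le_max_right _ _) hL2 hL1
  have heqt : ∀ t ∈ Ioc (0 : ℝ) T, ∀ v x : ℝ, u₁ t v x = u₂ t v x :=
    fun t ht v x => le_antisymm (h12 t ht v x) (h21 t ht v x)
  intro t ht v x
  rcases eq_or_lt_of_le ht.1 with h0 | h0
  · -- t = 0 : use continuity
    have hf : ContinuousOn (fun s : ℝ => u₁ s v x - u₂ s v x) (Icc 0 T) := by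
      have hmap : ∀ s ∈ Icc (0:ℝ) T,
          (fun s : ℝ => (s, v, x)) s ∈ {q : ℝ × ℝ × ℝ | q.1 ∈ Icc 0 T} := fun s hs => hs
      have hco : Continuous (fun s : ℝ => (s, v, x)) := by continuity
      exact (hc₁.comp hco.continuousOn hmap).sub (hc₂.comp hco.continuousOn hmap)
    have hcwa := (hf 0 (left_mem_Icc.2 hT.le)).tendsto
    have h1 : Tendsto (fun s : ℝ => u₁ s v x - u₂ s v x) (nhdsWithin 0 (Ioc 0 T))
        (nhds (u₁ 0 v x - u₂ 0 v x)) :=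
      hcwa.mono_left (nhdsWithin_mono 0 Ioc_subset_Icc_self)
    have h2 : Tendsto (fun s : ℝ => u₁ s v x - u₂ s v x) (nhdsWithin 0 (Ioc 0 T))
        (nhds 0) := by
      apply Tendsto.congr' _ tendsto_const_nhds
      filter_upwards [self_mem_nhdsWithin] with s hs
      exact (sub_eq_zero.2 (heqt s hs v x)).symm
    have hne : (nhdsWithin (0:ℝ) (Ioc 0 T)).NeBot := by
      rw [← mem_closure_iff_nhdsWithin_neBot, closure_Ioc (ne_of_lt hT)]
      exact left_mem_Icc.2 hT.le
    have h3 := tendsto_nhds_unique h1 h2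
    subst h0
    linarith [h3]
  · exact heqt t ⟨h0, ht.2⟩ v x
end

section
/- Fix λ>0, s∈ℝ and (v',x')∈ℝ². Then for every t<s and (v,x)∈ℝ², the function (t,v,x) ↦ Γ^λ(t,v,x;s,v',x') satisfies the backward Kolmogorov (kinetic) equation (λ/2)·∂_{vv}Γ^λ + v·∂_x Γ^λ + ∂_t Γ^λ = 0, where all derivatives are taken in the backward variables (t,v,x). -/
/-- The kinetic Gaussian kernel `Γ^λ(t,v,x;s,v',x')`. -/
noncomputable def Gam (l t v x s v' x' : ℝ) : ℝ :=
  Real.sqrt 3 / (Real.pi * l * (s - t) ^ 2) *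
    Real.exp (-(2 * (v' - v) ^ 2) / (l * (s - t))
      + 6 * (v' - v) * (x' - x - v * (s - t)) / (l * (s - t) ^ 2)
      - 6 * (x' - x - v * (s - t)) ^ 2 / (l * (s - t) ^ 3))

lemma gam_deriv_v (l s t v x v' x' : ℝ) (hl : l ≠ 0) (hu : s - t ≠ 0) :
    HasDerivAt (fun w => Gam l t w x s v' x')
      (Gam l t v x s v' x' *
        (-(2 * (v' - v)) / (l * (s - t)) + 6 * (x' - x - v * (s - t)) / (l * (s - t) ^ 2))) v := by
  have h1 : HasDerivAt (fun w : ℝ => v' - w) (-1) v := by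
    simpa using (hasDerivAt_id v).const_sub v'
  have h2 : HasDerivAt (fun w : ℝ => x' - x - w * (s - t)) (-(s - t)) v := by
    simpa using ((hasDerivAt_id v).mul_const (s - t)).const_sub (x' - x)
  have hE := ((((h1.pow 2).const_mul 2).neg.div_const (l * (s - t))).add
      (((h1.const_mul 6).mul h2).div_const (l * (s - t) ^ 2))).sub
      (((h2.pow 2).const_mul 6).div_const (l * (s - t) ^ 3))
  have hG := hE.exp.const_mul (Real.sqrt 3 / (Real.pi * l * (s - t) ^ 2))
  refine hG.congr_deriv ?_
  unfold Gam
  simp only [Pi.add_apply, Pi.sub_apply, Pi.mul_apply, Pi.div_apply, Pi.neg_apply, Pi.pow_apply]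
  push_cast
  field_simp
  ring

lemma gam_deriv_x (l s t v x v' x' : ℝ) (hl : l ≠ 0) (hu : s - t ≠ 0) :
    HasDerivAt (fun y => Gam l t v y s v' x')
      (Gam l t v x s v' x' *
        (-(6 * (v' - v)) / (l * (s - t) ^ 2)
          + 12 * (x' - x - v * (s - t)) / (l * (s - t) ^ 3))) x := by
  have h2 : HasDerivAt (fun y : ℝ => x' - y - v * (s - t)) (-1) x := by
    simpa using ((hasDerivAt_id x).const_sub x').sub_const (v * (s - t))
  have hE := (((hasDerivAt_const x (-(2 * (v' - v) ^ 2) / (l * (s - t)))).add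
      ((h2.const_mul (6 * (v' - v))).div_const (l * (s - t) ^ 2))).sub
      (((h2.pow 2).const_mul 6).div_const (l * (s - t) ^ 3)))
  have hG := hE.exp.const_mul (Real.sqrt 3 / (Real.pi * l * (s - t) ^ 2))
  refine hG.congr_deriv ?_
  unfold Gam
  simp only [Pi.add_apply, Pi.sub_apply, Pi.mul_apply, Pi.div_apply, Pi.neg_apply, Pi.pow_apply]
  push_cast
  field_simp
  ring

lemma gam_deriv_t (l s t v x v' x' : ℝ) (hl : l ≠ 0) (hu : s - t ≠ 0) :
    HasDerivAt (fun τ => Gam l τ v x s v' x')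
      (Gam l t v x s v' x' *
        (2 / (s - t) - 2 * (v' - v) ^ 2 / (l * (s - t) ^ 2)
          + 6 * (v' - v) * v / (l * (s - t) ^ 2)
          + 12 * (v' - v) * (x' - x - v * (s - t)) / (l * (s - t) ^ 3)
          - 12 * (x' - x - v * (s - t)) * v / (l * (s - t) ^ 3)
          - 18 * (x' - x - v * (s - t)) ^ 2 / (l * (s - t) ^ 4))) t := by
  have hs : HasDerivAt (fun τ : ℝ => s - τ) (-1) t := by
    simpa using (hasDerivAt_id t).const_sub s
  have hb : HasDerivAt (fun τ : ℝ => x' - x - v * (s - τ)) v t := by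
    simpa using (hs.const_mul v).const_sub (x' - x)
  have hne1 : l * (s - t) ≠ 0 := mul_ne_zero hl hu
  have hne2 : l * (s - t) ^ 2 ≠ 0 := mul_ne_zero hl (pow_ne_zero 2 hu)
  have hne3 : l * (s - t) ^ 3 ≠ 0 := mul_ne_zero hl (pow_ne_zero 3 hu)
  have hneC : Real.pi * l * (s - t) ^ 2 ≠ 0 :=
    mul_ne_zero (mul_ne_zero Real.pi_ne_zero hl) (pow_ne_zero 2 hu)
  have hE := (((hasDerivAt_const t (-(2 * (v' - v) ^ 2))).div (hs.const_mul l) hne1).add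
      ((hb.const_mul (6 * (v' - v))).div ((hs.pow 2).const_mul l) hne2)).sub
      (((hb.pow 2).const_mul 6).div ((hs.pow 3).const_mul l) hne3)
  have hC := (hasDerivAt_const t (Real.sqrt 3)).div ((hs.pow 2).const_mul (Real.pi * l)) hneC
  have hG := hC.mul hE.exp
  refine hG.congr_deriv ?_
  unfold Gam
  simp only [Pi.add_apply, Pi.sub_apply, Pi.mul_apply, Pi.div_apply, Pi.neg_apply, Pi.pow_apply]
  push_cast
  field_simp
  ring

/-- For fixed forward point `(s,v',x')`, the kinetic Gaussian kernel satisfies the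
backward Kolmogorov equation `(λ/2)∂_{vv}Γ + v∂_xΓ + ∂_tΓ = 0` in the backward
variables `(t,v,x)`, for `t < s`. -/
theorem stmt6 (l s v' x' : ℝ) (hl : 0 < l) :
    ∀ t : ℝ, t < s → ∀ v x : ℝ,
      l / 2 * deriv (fun w => deriv (fun w' => Gam l t w' x s v' x') w) v
        + v * deriv (fun y => Gam l t v y s v' x') x
        + deriv (fun τ => Gam l τ v x s v' x') t = 0 := by
  intro t hts v x
  have hl' : l ≠ 0 := hl.ne'
  have hu : s - t ≠ 0 := (sub_pos.mpr hts).ne'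
  have hfun : (fun w => deriv (fun w' => Gam l t w' x s v' x') w)
      = fun w => Gam l t w x s v' x' *
        (-(2 * (v' - w)) / (l * (s - t)) + 6 * (x' - x - w * (s - t)) / (l * (s - t) ^ 2)) :=
    funext fun w => (gam_deriv_v l s t w x v' x' hl' hu).deriv
  have hlin : HasDerivAt (fun w : ℝ =>
      -(2 * (v' - w)) / (l * (s - t)) + 6 * (x' - x - w * (s - t)) / (l * (s - t) ^ 2))
      (2 / (l * (s - t)) - 6 / (l * (s - t))) v := by
    have h1 : HasDerivAt (fun w : ℝ => v' - w) (-1) v := by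
      simpa using (hasDerivAt_id v).const_sub v'
    have h2 : HasDerivAt (fun w : ℝ => x' - x - w * (s - t)) (-(s - t)) v := by
      simpa using ((hasDerivAt_id v).mul_const (s - t)).const_sub (x' - x)
    have := ((h1.const_mul 2).neg.div_const (l * (s - t))).add
      ((h2.const_mul 6).div_const (l * (s - t) ^ 2))
    refine this.congr_deriv ?_
    field_simp
    ring
  have h2nd := (gam_deriv_v l s t v x v' x' hl' hu).fun_mul hlin
  rw [hfun, h2nd.deriv, (gam_deriv_x l s t v x v' x' hl' hu).deriv,
    (gam_deriv_t l s t v x v' x' hl' hu).deriv]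
  set G := Gam l t v x s v' x' with hG
  field_simp
  ring
end

section
/- The kinetic Gaussian kernel satisfies the Chapman–Kolmogorov identity: for every λ>0, all times t<r<s, and all (v,x),(v',x') ∈ ℝ², one has ∫_{ℝ²} Γ^λ(t,v,x;r,w,y) · Γ^λ(r,w,y;s,v',x') dw dy = Γ^λ(t,v,x;s,v',x'). -/
open MeasureTheory

open Real


lemma integrable_exp_quad {a : ℝ} (b c : ℝ) (ha : 0 < a) :
    Integrable (fun x : ℝ => Real.exp (-(a * x ^ 2) + b * x + c)) := by
  have h : ∀ x : ℝ, -(a * x ^ 2) + b * x + c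
      = (-a * (x - b / (2 * a)) ^ 2) + (c + b ^ 2 / (4 * a)) := by
    intro x; field_simp; ring
  simp_rw [h, Real.exp_add]
  exact (((integrable_exp_neg_mul_sq ha).comp_sub_right (b / (2 * a))).mul_const _)

lemma integral_exp_quad {a : ℝ} (b c : ℝ) (ha : 0 < a) :
    ∫ x : ℝ, Real.exp (-(a * x ^ 2) + b * x + c)
      = Real.sqrt (π / a) * Real.exp (b ^ 2 / (4 * a) + c) := by
  have h : ∀ x : ℝ, -(a * x ^ 2) + b * x + c
      = (-a * (x - b / (2 * a)) ^ 2) + (b ^ 2 / (4 * a) + c) := by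
    intro x; field_simp; ring
  simp_rw [h, Real.exp_add, integral_mul_const]
  rw [integral_sub_right_eq_self (fun x => Real.exp (-a * x ^ 2)) (b / (2 * a)),
    integral_gaussian]

noncomputable def gker (l u a b : ℝ) : ℝ :=
  Real.sqrt 3 / (Real.pi * l * u ^ 2) *
    Real.exp (-(2 * a ^ 2) / (l * u) + 6 * a * b / (l * u ^ 2) - 6 * b ^ 2 / (l * u ^ 3))

set_option maxHeartbeats 1600000 in
lemma key (l σ τ A B : ℝ) (hl : 0 < l) (hσ : 0 < σ) (hτ : 0 < τ) :
    (∫ p : ℝ × ℝ, gker l σ p.1 p.2 * gker l τ (A - p.1) (B - p.2 - p.1 * τ))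
      = gker l (σ + τ) A B := by
  have hπ := Real.pi_pos
  have hst : (0:ℝ) < σ ^ 3 + τ ^ 3 := by positivity
  obtain ⟨K, hK⟩ : ∃ Z : ℝ, Z = 3 / (π ^ 2 * l ^ 2 * σ ^ 2 * τ ^ 2) := ⟨_, rfl⟩
  obtain ⟨ay, hay⟩ : ∃ Z : ℝ, Z = 6 * (σ ^ 3 + τ ^ 3) / (l * σ ^ 3 * τ ^ 3) := ⟨_, rfl⟩
  obtain ⟨By, hBy⟩ : ∃ Z : ℝ → ℝ, Z = fun w =>
    6 * w / (l * σ ^ 2) - 6 * (A - w) / (l * τ ^ 2) + 12 * (B - w * τ) / (l * τ ^ 3) := ⟨_, rfl⟩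
  obtain ⟨Cy, hCy⟩ : ∃ Z : ℝ → ℝ, Z = fun w =>
    -(2 * w ^ 2) / (l * σ) - 2 * (A - w) ^ 2 / (l * τ) + 6 * (A - w) * (B - w * τ) / (l * τ ^ 2)
      - 6 * (B - w * τ) ^ 2 / (l * τ ^ 3) := ⟨_, rfl⟩
  obtain ⟨aw, haw⟩ : ∃ Z : ℝ, Z = (σ + τ) ^ 4 / (2 * l * σ * τ * (σ ^ 3 + τ ^ 3)) := ⟨_, rfl⟩
  obtain ⟨bw, hbw⟩ : ∃ Z : ℝ, Z = 3 * σ * (τ ^ 2 - σ ^ 2) * (2 * B - A * τ) / (l * τ ^ 2 * (σ ^ 3 + τ ^ 3))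
      - 2 * A / (l * τ) + 6 * B / (l * τ ^ 2) := ⟨_, rfl⟩
  obtain ⟨cw, hcw⟩ : ∃ Z : ℝ, Z = 3 * σ ^ 3 * (2 * B - A * τ) ^ 2 / (2 * l * τ ^ 3 * (σ ^ 3 + τ ^ 3))
      - 2 * A ^ 2 / (l * τ) + 6 * A * B / (l * τ ^ 2) - 6 * B ^ 2 / (l * τ ^ 3) := ⟨_, rfl⟩
  have hKpos : 0 < K := by rw [hK]; positivity
  have haypos : 0 < ay := by rw [hay]; positivity
  have hawpos : 0 < aw := by rw [haw]; positivity
  -- pointwise rewriting of the integrand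
  have h1 : ∀ w y : ℝ, gker l σ w y * gker l τ (A - w) (B - y - w * τ)
      = K * Real.exp (-(ay * y ^ 2) + By w * y + Cy w) := by
    intro w y
    rw [gker, gker, show ∀ p q E F : ℝ, p * Real.exp E * (q * Real.exp F)
        = p * q * Real.exp (E + F) from by intros; rw [Real.exp_add]; ring]
    congr 1
    · rw [hK, div_mul_div_comm, Real.mul_self_sqrt (by norm_num : (0:ℝ) ≤ 3)]
      field_simp
    · rw [hay, hBy, hCy]
      field_simp
      ring
  -- decomposition of the post-y exponent as a quadratic in w
  have h2 : ∀ w : ℝ, (By w) ^ 2 / (4 * ay) + Cy w = -(aw * w ^ 2) + bw * w + cw := by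
    intro w
    rw [hay, hBy, hCy, haw, hbw, hcw]
    field_simp
    ring
  -- integrability
  have hcont : Continuous fun p : ℝ × ℝ => K * Real.exp (-(ay * p.2 ^ 2) + By p.1 * p.2 + Cy p.1) := by
    rw [hBy, hCy]; fun_prop
  have hfun : (fun p : ℝ × ℝ => gker l σ p.1 p.2 * gker l τ (A - p.1) (B - p.2 - p.1 * τ))
      = fun p : ℝ × ℝ => K * Real.exp (-(ay * p.2 ^ 2) + By p.1 * p.2 + Cy p.1) := by
    funext p; exact h1 p.1 p.2
  have hnormint : ∀ w : ℝ, (∫ y : ℝ, ‖K * Real.exp (-(ay * y ^ 2) + By w * y + Cy w)‖)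
      = K * (Real.sqrt (π / ay) * Real.exp ((By w) ^ 2 / (4 * ay) + Cy w)) := by
    intro w
    simp only [norm_mul, Real.norm_eq_abs, abs_of_pos hKpos, Real.abs_exp]
    rw [MeasureTheory.integral_const_mul, integral_exp_quad _ _ haypos]
  have hint : Integrable (fun p : ℝ × ℝ =>
      K * Real.exp (-(ay * p.2 ^ 2) + By p.1 * p.2 + Cy p.1)) := by
    rw [Measure.volume_eq_prod]
    refine (integrable_prod_iff hcont.aestronglyMeasurable).2 ⟨?_, ?_⟩
    · exact Filter.Eventually.of_forall fun w =>
        ((integrable_exp_quad (By w) (Cy w) haypos).const_mul K)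
    · have : (fun w : ℝ => ∫ y : ℝ, ‖K * Real.exp (-(ay * y ^ 2) + By w * y + Cy w)‖)
          = fun w : ℝ => (K * Real.sqrt (π / ay)) * Real.exp (-(aw * w ^ 2) + bw * w + cw) := by
        funext w; rw [hnormint w, h2 w]; ring
      rw [this]
      exact (integrable_exp_quad bw cw hawpos).const_mul _
  -- main computation
  rw [hfun, Measure.volume_eq_prod, integral_prod _ hint]
  have hinner : ∀ w : ℝ, (∫ y : ℝ, K * Real.exp (-(ay * y ^ 2) + By w * y + Cy w))
      = (K * Real.sqrt (π / ay)) * Real.exp (-(aw * w ^ 2) + bw * w + cw) := by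
    intro w
    rw [MeasureTheory.integral_const_mul _ _, integral_exp_quad _ _ haypos, h2 w]; ring
  simp_rw [hinner]
  rw [MeasureTheory.integral_const_mul _ _, integral_exp_quad _ _ hawpos, gker]
  -- final constant and exponent identities
  have hexp : bw ^ 2 / (4 * aw) + cw
      = -(2 * A ^ 2) / (l * (σ + τ)) + 6 * A * B / (l * (σ + τ) ^ 2)
        - 6 * B ^ 2 / (l * (σ + τ) ^ 3) := by
    rw [haw, hbw, hcw]
    field_simp
    ring
  rw [hexp]
  have hconst : K * (Real.sqrt (π / ay) * Real.sqrt (π / aw))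
      = Real.sqrt 3 / (π * l * (σ + τ) ^ 2) := by
    rw [← Real.sqrt_mul (by positivity) (π / aw)]
    have h3 : (π / ay) * (π / aw) = 3 * (π * l * σ ^ 2 * τ ^ 2 / (3 * (σ + τ) ^ 2)) ^ 2 := by
      rw [hay, haw]; field_simp; ring
    rw [h3, Real.sqrt_mul (by norm_num : (0:ℝ) ≤ 3), Real.sqrt_sq (by positivity), hK]
    field_simp
  rw [← hconst]; ring

/-- The Chapman–Kolmogorov identity for the kinetic Gaussian kernel. -/
theorem stmt9 (l t r s v x v' x' : ℝ) (hl : 0 < l) (htr : t < r) (hrs : r < s) :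
    (∫ p : ℝ × ℝ, Gam l t v x r p.1 p.2 * Gam l r p.1 p.2 s v' x')
      = Gam l t v x s v' x' := by
  have hσ : 0 < r - t := sub_pos.2 htr
  have hτ : 0 < s - r := sub_pos.2 hrs
  have trans : (∫ p : ℝ × ℝ, Gam l t v x r p.1 p.2 * Gam l r p.1 p.2 s v' x')
      = ∫ p : ℝ × ℝ, Gam l t v x r (p + (v, x + v * (r - t))).1 (p + (v, x + v * (r - t))).2
          * Gam l r (p + (v, x + v * (r - t))).1 (p + (v, x + v * (r - t))).2 s v' x' :=
    (integral_add_right_eq_self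
      (fun p : ℝ × ℝ => Gam l t v x r p.1 p.2 * Gam l r p.1 p.2 s v' x')
      (v, x + v * (r - t))).symm
  rw [trans]
  have hpt : ∀ p : ℝ × ℝ,
      Gam l t v x r (p + (v, x + v * (r - t))).1 (p + (v, x + v * (r - t))).2
          * Gam l r (p + (v, x + v * (r - t))).1 (p + (v, x + v * (r - t))).2 s v' x'
      = gker l (r - t) p.1 p.2
          * gker l (s - r) ((v' - v) - p.1) ((x' - x - v * (s - t)) - p.2 - p.1 * (s - r)) := by
    intro p
    show Gam l t v x r (p.1 + v) (p.2 + (x + v * (r - t)))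
        * Gam l r (p.1 + v) (p.2 + (x + v * (r - t))) s v' x' = _
    rw [show Gam l t v x r (p.1 + v) (p.2 + (x + v * (r - t)))
        = gker l (r - t) (p.1 + v - v) (p.2 + (x + v * (r - t)) - x - v * (r - t)) from rfl,
      show Gam l r (p.1 + v) (p.2 + (x + v * (r - t))) s v' x'
        = gker l (s - r) (v' - (p.1 + v))
            (x' - (p.2 + (x + v * (r - t))) - (p.1 + v) * (s - r)) from rfl,
      show p.1 + v - v = p.1 from by ring,
      show p.2 + (x + v * (r - t)) - x - v * (r - t) = p.2 from by ring,
      show v' - (p.1 + v) = (v' - v) - p.1 from by ring,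
      show x' - (p.2 + (x + v * (r - t))) - (p.1 + v) * (s - r)
        = (x' - x - v * (s - t)) - p.2 - p.1 * (s - r) from by ring]
  simp_rw [hpt]
  rw [key l (r - t) (s - r) (v' - v) (x' - x - v * (s - t)) hl hσ hτ]
  rw [show Gam l t v x s v' x' = gker l (s - t) (v' - v) (x' - x - v * (s - t)) from rfl,
    show (r - t) + (s - r) = s - t from by ring]
end

section
/- For every λ>0 and every μ>λ there exists a constant C>0 (depending only on λ and μ) such that for all t<s and all (v,x),(v',x') ∈ ℝ², the derivative of the kinetic Gaussian kernel in the backward velocity variable satisfies |∂_v Γ^λ(t,v,x;s,v',x')| ≤ C·(s−t)^{−1/2} · Γ^μ(t,v,x;s,v',x'). -/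
lemma mul_exp_le_aux (c r : ℝ) (hc : 0 < c) (hr : 0 ≤ r) :
    r * Real.exp (-(c * r ^ 2)) ≤ (Real.sqrt c)⁻¹ := by
  have hsc : 0 < Real.sqrt c := Real.sqrt_pos.2 hc
  have h1 : Real.sqrt c * r ≤ Real.exp (c * r ^ 2) := by
    have h2 : Real.sqrt c * r ≤ 1 + (Real.sqrt c * r) ^ 2 := by
      nlinarith [sq_nonneg (Real.sqrt c * r - 1)]
    have h3 : (Real.sqrt c * r) ^ 2 = c * r ^ 2 := by
      rw [mul_pow, Real.sq_sqrt hc.le]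
    have h4 : c * r ^ 2 + 1 ≤ Real.exp (c * r ^ 2) := Real.add_one_le_exp _
    linarith
  have key : Real.sqrt c * (r * Real.exp (-(c * r ^ 2))) ≤ 1 := by
    have h2 := (Real.exp_pos (-(c * r ^ 2))).le
    calc Real.sqrt c * (r * Real.exp (-(c * r ^ 2)))
        = (Real.sqrt c * r) * Real.exp (-(c * r ^ 2)) := by ring
      _ ≤ Real.exp (c * r ^ 2) * Real.exp (-(c * r ^ 2)) :=
          mul_le_mul_of_nonneg_right h1 h2
      _ = 1 := by rw [← Real.exp_add]; simp
  rw [inv_eq_one_div, le_div_iff₀ hsc]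
  nlinarith [key]

set_option maxHeartbeats 1000000 in
/-- Gaussian estimate for the first derivative of the kinetic kernel in the
backward velocity variable: `|∂_v Γ^λ| ≤ C (s−t)^{−1/2} Γ^μ` for any `μ > λ`. -/
theorem stmt15 (l μ : ℝ) (hl : 0 < l) (hlμ : l < μ) :
    ∃ C : ℝ, 0 < C ∧ ∀ t s v x v' x' : ℝ, t < s →
      |deriv (fun w => Gam l t w x s v' x') v|
        ≤ C * (Real.sqrt (s - t))⁻¹ * Gam μ t v x s v' x' := by
  have hμ : 0 < μ := hl.trans hlμ
  have hδ : 0 < 1 / l - 1 / μ := by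
    rw [sub_pos]
    exact one_div_lt_one_div_of_lt hl hlμ
  set δ := 1 / l - 1 / μ with hδdef
  have hsd : 0 < Real.sqrt δ := Real.sqrt_pos.2 hδ
  refine ⟨7 * μ / (l ^ 2 * Real.sqrt δ), by positivity, ?_⟩
  intro t s v x v' x' hts
  have hτ : 0 < s - t := sub_pos.2 hts
  set τ := s - t with hτdef
  have hτ0 : τ ≠ 0 := hτ.ne'
  have hl0 : l ≠ 0 := hl.ne'
  have hμ0 : μ ≠ 0 := hμ.ne'
  set X := x' - x with hXdef
  set p2 : ℝ := -(2 * τ ^ 2) with hp2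
  set p1 : ℝ := -(2 * v' * τ ^ 2) + 6 * X * τ with hp1
  set p0 : ℝ := -(2 * v' ^ 2 * τ ^ 2) + 6 * v' * X * τ - 6 * X ^ 2 with hp0
  set c : ℝ := 1 / (l * τ ^ 3) with hc
  set A : ℝ := Real.sqrt 3 / (Real.pi * l * τ ^ 2) with hA
  -- rewrite Gam l as A * exp of a polynomial in the velocity variable
  have hfun : (fun w => Gam l t w x s v' x')
      = fun w => A * Real.exp (c * (p2 * w ^ 2 + p1 * w + p0)) := by
    funext w
    unfold Gam
    rw [← hτdef, ← hXdef]
    congr 1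
    rw [hc, hp2, hp1, hp0]
    field_simp
    ring
  have hP : HasDerivAt (fun w : ℝ => p2 * w ^ 2 + p1 * w + p0) (2 * p2 * v + p1) v := by
    have h2 : HasDerivAt (fun w : ℝ => w ^ 2) (2 * v) v := by
      simpa using hasDerivAt_pow 2 v
    have h := ((h2.const_mul p2).add ((hasDerivAt_id v).const_mul p1)).add_const p0
    refine h.congr_deriv ?_
    ring
  have hE : HasDerivAt (fun w => A * Real.exp (c * (p2 * w ^ 2 + p1 * w + p0)))
      (A * Real.exp (c * (p2 * v ^ 2 + p1 * v + p0)) * (c * (2 * p2 * v + p1))) v := by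
    have h := ((hP.const_mul c).exp).const_mul A
    refine h.congr_deriv ?_
    ring
  have hGlv : Gam l t v x s v' x' = A * Real.exp (c * (p2 * v ^ 2 + p1 * v + p0)) :=
    congrFun hfun v
  have hderiv : deriv (fun w => Gam l t w x s v' x') v
      = Gam l t v x s v' x' * (c * (2 * p2 * v + p1)) := by
    rw [hfun, hE.deriv, hGlv]
  -- positivity of the kernels
  have hGl : 0 < Gam l t v x s v' x' := by
    unfold Gam
    rw [← hτdef]
    have h1 : 0 < Real.pi * l * τ ^ 2 := by positivity
    positivity
  have hGμ : 0 < Gam μ t v x s v' x' := by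
    unfold Gam
    rw [← hτdef]
    have h1 : 0 < Real.pi * μ * τ ^ 2 := by positivity
    positivity
  set uu := v' - v with huu
  set B := (X - v * τ) / τ with hB
  set K := 2 * uu ^ 2 - 6 * uu * B + 6 * B ^ 2 with hK
  have hK0 : 0 ≤ K := by
    rw [hK]
    nlinarith [sq_nonneg (2 * uu - 3 * B), sq_nonneg B]
  -- relation between the two kernels
  have hGlμ : Gam l t v x s v' x'
      = μ / l * Real.exp (-(δ / τ * K)) * Gam μ t v x s v' x' := by
    unfold Gam
    rw [← hτdef, ← hXdef]
    have hexp : (-(2 * (v' - v) ^ 2) / (l * τ)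
          + 6 * (v' - v) * (X - v * τ) / (l * τ ^ 2)
          - 6 * (X - v * τ) ^ 2 / (l * τ ^ 3))
        = -(δ / τ * K) + (-(2 * (v' - v) ^ 2) / (μ * τ)
          + 6 * (v' - v) * (X - v * τ) / (μ * τ ^ 2)
          - 6 * (X - v * τ) ^ 2 / (μ * τ ^ 3)) := by
      rw [hK, hB, huu, hδdef]
      field_simp
      ring
    rw [hexp, Real.exp_add]
    field_simp
  -- bound on the derivative factor
  have habs : |c * (2 * p2 * v + p1)| ≤ 7 * Real.sqrt K / (l * τ) := by
    have h1 : c * (2 * p2 * v + p1) = (-(2 * uu) + 6 * B) / (l * τ) := by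
      rw [hc, hp2, hp1, huu, hB]
      field_simp
      ring
    rw [h1, abs_div, abs_of_pos (show (0:ℝ) < l * τ by positivity)]
    gcongr
    have hs2 : Real.sqrt K ^ 2 = K := Real.sq_sqrt hK0
    have h2 : (-(2 * uu) + 6 * B) ^ 2 ≤ (7 * Real.sqrt K) ^ 2 := by
      rw [mul_pow, hs2, hK]
      nlinarith [sq_nonneg (2 * uu - 3 * B), sq_nonneg uu, sq_nonneg B]
    calc |(-(2 * uu) + 6 * B)|
        = Real.sqrt ((-(2 * uu) + 6 * B) ^ 2) := (Real.sqrt_sq_eq_abs _).symm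
      _ ≤ Real.sqrt ((7 * Real.sqrt K) ^ 2) := Real.sqrt_le_sqrt h2
      _ = 7 * Real.sqrt K := Real.sqrt_sq (by positivity)
  -- scalar gaussian bound
  have hse : Real.sqrt K * Real.exp (-(δ / τ * K)) ≤ (Real.sqrt (δ / τ))⁻¹ := by
    have h := mul_exp_le_aux (δ / τ) (Real.sqrt K) (by positivity) (Real.sqrt_nonneg K)
    rwa [Real.sq_sqrt hK0] at h
  -- assemble
  rw [hderiv, abs_mul, abs_of_pos hGl]
  have hst : 0 < Real.sqrt τ := Real.sqrt_pos.2 hτ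
  calc Gam l t v x s v' x' * |c * (2 * p2 * v + p1)|
      ≤ Gam l t v x s v' x' * (7 * Real.sqrt K / (l * τ)) :=
        mul_le_mul_of_nonneg_left habs hGl.le
    _ = 7 * μ / (l ^ 2 * τ) * Gam μ t v x s v' x'
          * (Real.sqrt K * Real.exp (-(δ / τ * K))) := by
        rw [hGlμ]
        generalize Gam μ t v x s v' x' = G
        generalize Real.exp (-(δ / τ * K)) = E
        generalize Real.sqrt K = R
        field_simp
    _ ≤ 7 * μ / (l ^ 2 * τ) * Gam μ t v x s v' x' * (Real.sqrt (δ / τ))⁻¹ := by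
        apply mul_le_mul_of_nonneg_left hse (by positivity)
    _ = 7 * μ / (l ^ 2 * Real.sqrt δ) * (Real.sqrt τ)⁻¹ * Gam μ t v x s v' x' := by
        rw [Real.sqrt_div hδ.le]
        generalize Gam μ t v x s v' x' = G
        rw [show τ = Real.sqrt τ * Real.sqrt τ from (Real.mul_self_sqrt hτ.le).symm]
        generalize Real.sqrt τ = st at hst
        generalize Real.sqrt δ = sd at hsd
        field_simp
        rw [Real.sqrt_sq hst.le]
        ring
end

section
/- For every λ>0 and every μ>λ there exists a constant C>0 (depending only on λ and μ) such that for all t<s and all (v,x),(v',x') ∈ ℝ², the second derivative of the kinetic Gaussian kernel in the backward velocity variable satisfies |∂_{vv} Γ^λ(t,v,x;s,v',x')| ≤ C·(s−t)^{−1} · Γ^μ(t,v,x;s,v',x'). -/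
noncomputable def Efun (l τ x v' x' w : ℝ) : ℝ :=
  -(2 * (v' - w) ^ 2) / (l * τ)
    + 6 * (v' - w) * (x' - x - w * τ) / (l * τ ^ 2)
    - 6 * (x' - x - w * τ) ^ 2 / (l * τ ^ 3)

lemma Gam_eq (l t v x s v' x' : ℝ) :
    Gam l t v x s v' x' =
      Real.sqrt 3 / (Real.pi * l * (s - t) ^ 2) *
        Real.exp (Efun l (s - t) x v' x' v) := rfl

set_option maxHeartbeats 1000000 in
lemma Efun_hasDerivAt (l τ x v' x' : ℝ) (hl : l ≠ 0) (hτ : τ ≠ 0) (w : ℝ) :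
    HasDerivAt (fun w => Efun l τ x v' x' w)
      ((-2 * (v' - w) + 6 * (x' - x - w * τ) / τ) / (l * τ)) w := by
  have ha : HasDerivAt (fun w : ℝ => v' - w) (-1) w := (hasDerivAt_id w).const_sub v'
  have hb : HasDerivAt (fun w : ℝ => x' - x - w * τ) (-(1 * τ)) w :=
    ((hasDerivAt_id w).mul_const τ).const_sub (x' - x)
  have h1 := (((ha.pow 2).const_mul 2).neg).div_const (l * τ)
  have h2 := ((ha.const_mul 6).mul hb).div_const (l * τ ^ 2)
  have h3 := ((hb.pow 2).const_mul 6).div_const (l * τ ^ 3)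
  have H := (h1.add h2).sub h3
  simp only [Efun]
  refine H.congr_deriv ?_
  field_simp
  ring

set_option maxHeartbeats 1000000 in
lemma eps_hasDerivAt (l τ x v' x' : ℝ) (hl : l ≠ 0) (hτ : τ ≠ 0) (w : ℝ) :
    HasDerivAt (fun w => (-2 * (v' - w) + 6 * (x' - x - w * τ) / τ) / (l * τ))
      (-4 / (l * τ)) w := by
  have ha : HasDerivAt (fun w : ℝ => v' - w) (-1) w := (hasDerivAt_id w).const_sub v'
  have hb : HasDerivAt (fun w : ℝ => x' - x - w * τ) (-(1 * τ)) w :=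
    ((hasDerivAt_id w).mul_const τ).const_sub (x' - x)
  have H := ((ha.const_mul (-2)).add ((hb.div_const τ).const_mul 6)).div_const (l * τ)
  refine (H.congr_deriv ?_).congr_of_eventuallyEq (Filter.Eventually.of_forall fun y => ?_)
  · rw [one_mul, neg_div, div_self hτ]
    norm_num
  · simp only [Pi.add_apply]; ring

set_option maxHeartbeats 1000000 in
/-- Gaussian estimate for the second derivative of the kinetic kernel in the
backward velocity variable: `|∂_{vv} Γ^λ| ≤ C (s−t)^{−1} Γ^μ` for any `μ > λ`. -/
theorem stmt16 (l μ : ℝ) (hl : 0 < l) (hlμ : l < μ) :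
    ∃ C : ℝ, 0 < C ∧ ∀ t s v x v' x' : ℝ, t < s →
      |deriv (fun w => deriv (fun w' => Gam l t w' x s v' x') w) v|
        ≤ C * (s - t)⁻¹ * Gam μ t v x s v' x' := by
  have hμ : 0 < μ := hl.trans hlμ
  set θ : ℝ := (μ - l) / μ with hθdef
  have hθ : 0 < θ := div_pos (by linarith) hμ
  refine ⟨μ / l ^ 2 * (12 / θ + 4), by positivity, ?_⟩
  intro t s v x v' x' hts
  have hτ : (0:ℝ) < s - t := sub_pos.2 hts
  have hτ' : s - t ≠ 0 := ne_of_gt hτ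
  have hl' : l ≠ 0 := ne_of_gt hl
  have hμ' : μ ≠ 0 := ne_of_gt hμ
  have hπ : (0:ℝ) < Real.pi := Real.pi_pos
  have h3 : (0:ℝ) < Real.sqrt 3 := Real.sqrt_pos.2 (by norm_num)
  set K : ℝ := Real.sqrt 3 / (Real.pi * l * (s - t) ^ 2) with hK
  have hKpos : 0 < K := by positivity
  -- first derivative in v
  have hinner : (fun w => deriv (fun w' => Gam l t w' x s v' x') w)
      = fun w => K * Real.exp (Efun l (s - t) x v' x' w) *
          ((-2 * (v' - w) + 6 * (x' - x - w * (s - t)) / (s - t)) / (l * (s - t))) := by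
    funext w
    have h := ((Efun_hasDerivAt l (s - t) x v' x' hl' hτ' w).exp.const_mul K)
    have h2 : (fun w' => Gam l t w' x s v' x')
        = fun w' => K * Real.exp (Efun l (s - t) x v' x' w') :=
      funext fun w' => Gam_eq l t w' x s v' x'
    rw [h2, h.deriv]; ring
  rw [hinner]
  -- second derivative
  have h1 : HasDerivAt (fun w => K * Real.exp (Efun l (s - t) x v' x' w))
      (K * (Real.exp (Efun l (s - t) x v' x' v) *
        ((-2 * (v' - v) + 6 * (x' - x - v * (s - t)) / (s - t)) / (l * (s - t))))) v :=
    (Efun_hasDerivAt l (s - t) x v' x' hl' hτ' v).exp.const_mul K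
  have h2 := eps_hasDerivAt l (s - t) x v' x' hl' hτ' v
  have houter : HasDerivAt
      (fun w => K * Real.exp (Efun l (s - t) x v' x' w) *
        ((-2 * (v' - w) + 6 * (x' - x - w * (s - t)) / (s - t)) / (l * (s - t))))
      (K * (Real.exp (Efun l (s - t) x v' x' v) *
          ((-2 * (v' - v) + 6 * (x' - x - v * (s - t)) / (s - t)) / (l * (s - t)))) *
          ((-2 * (v' - v) + 6 * (x' - x - v * (s - t)) / (s - t)) / (l * (s - t)))
        + K * Real.exp (Efun l (s - t) x v' x' v) * (-4 / (l * (s - t)))) v :=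
    h1.mul h2
  rw [houter.deriv]
  -- abbreviations
  set a : ℝ := v' - v with haa
  set b : ℝ := x' - x - v * (s - t) with hbb
  set p : ℝ := b / (s - t) with hpp
  set q : ℝ := 2 * a ^ 2 - 6 * a * p + 6 * p ^ 2 with hqq
  have hq0 : 0 ≤ q := by
    rw [hqq]; nlinarith [sq_nonneg (2 * a - 3 * p), sq_nonneg p]
  have hEeq : Efun l (s - t) x v' x' v = -(q / (l * (s - t))) := by
    simp only [Efun, hqq, hpp, hbb, haa]
    field_simp
    ring
  have hEμ : Efun μ (s - t) x v' x' v = -(q / (μ * (s - t))) := by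
    simp only [Efun, hqq, hpp, hbb, haa]
    field_simp
    ring
  have hεeq : (-2 * a + 6 * b / (s - t)) / (l * (s - t))
      = (-2 * a + 6 * p) / (l * (s - t)) := by rw [hpp]; ring
  set r : ℝ := q / (l * (s - t)) with hrr
  have hr0 : 0 ≤ r := by rw [hrr]; positivity
  -- key exponential estimate
  have hkey : (12 * r + 4) * Real.exp (-r) ≤ (12 / θ + 4) * Real.exp (-(q / (μ * (s - t)))) := by
    have hsplit : -r = -(q / (μ * (s - t))) + -(θ * r) := by
      rw [hrr, hθdef]; field_simp; ring
    rw [hsplit, Real.exp_add]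
    have he1 : Real.exp (-(θ * r)) ≤ 1 := Real.exp_le_one_iff.2 (by nlinarith)
    have he2 : r * Real.exp (-(θ * r)) ≤ 1 / θ := by
      have hE : θ * r + 1 ≤ Real.exp (θ * r) := Real.add_one_le_exp _
      rw [Real.exp_neg, mul_inv_le_iff₀ (Real.exp_pos _)]
      have h2' : (1 / θ) * (θ * r + 1) ≤ (1 / θ) * Real.exp (θ * r) :=
        mul_le_mul_of_nonneg_left hE (by positivity)
      have h3' : (1 / θ) * (θ * r + 1) = r + 1 / θ := by
        field_simp
      have h4' : (0:ℝ) < 1 / θ := by positivity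
      linarith
    have hepos : 0 < Real.exp (-(q / (μ * (s - t)))) := Real.exp_pos _
    have he0 : 0 ≤ Real.exp (-(θ * r)) := (Real.exp_pos _).le
    calc (12 * r + 4) * (Real.exp (-(q / (μ * (s - t)))) * Real.exp (-(θ * r)))
        = Real.exp (-(q / (μ * (s - t)))) *
            (12 * (r * Real.exp (-(θ * r))) + 4 * Real.exp (-(θ * r))) := by ring
      _ ≤ Real.exp (-(q / (μ * (s - t)))) * (12 * (1 / θ) + 4 * 1) := by
          apply mul_le_mul_of_nonneg_left _ hepos.le
          have h12 : 12 * (r * Real.exp (-(θ * r))) ≤ 12 * (1 / θ) := by linarith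
          linarith
      _ = (12 / θ + 4) * Real.exp (-(q / (μ * (s - t)))) := by ring
  -- pointwise bound on the square of eps
  have hε2 : ((-2 * a + 6 * p) / (l * (s - t))) ^ 2 ≤ 12 * q / (l * (s - t)) ^ 2 := by
    rw [div_pow]
    have hnum : (-2 * a + 6 * p) ^ 2 ≤ 12 * q := by
      rw [hqq]; nlinarith [sq_nonneg (5 * a - 6 * p), sq_nonneg p]
    have hden : (0:ℝ) < (l * (s - t)) ^ 2 := by positivity
    gcongr
  -- assemble
  rw [Gam_eq, hEμ, hεeq, hEeq]
  have habs : |K * (Real.exp (-r) * ((-2 * a + 6 * p) / (l * (s - t)))) *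
        ((-2 * a + 6 * p) / (l * (s - t)))
        + K * Real.exp (-r) * (-4 / (l * (s - t)))|
      ≤ K * Real.exp (-r) * (12 * q / (l * (s - t)) ^ 2 + 4 / (l * (s - t))) := by
    have heq : K * (Real.exp (-r) * ((-2 * a + 6 * p) / (l * (s - t)))) *
          ((-2 * a + 6 * p) / (l * (s - t)))
          + K * Real.exp (-r) * (-4 / (l * (s - t)))
        = K * Real.exp (-r) *
            (((-2 * a + 6 * p) / (l * (s - t))) ^ 2 - 4 / (l * (s - t))) := by ring
    rw [heq, abs_mul]
    have hKE : |K * Real.exp (-r)| = K * Real.exp (-r) :=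
      abs_of_pos (by positivity)
    rw [hKE]
    have h4pos : (0:ℝ) < 4 / (l * (s - t)) := by positivity
    have h12q : (0:ℝ) ≤ 12 * q / (l * (s - t)) ^ 2 := by positivity
    have habs2 : |((-2 * a + 6 * p) / (l * (s - t))) ^ 2 - 4 / (l * (s - t))|
        ≤ 12 * q / (l * (s - t)) ^ 2 + 4 / (l * (s - t)) := by
      rw [abs_sub_le_iff]
      refine ⟨by linarith, by linarith [sq_nonneg ((-2 * a + 6 * p) / (l * (s - t)))]⟩
    exact mul_le_mul_of_nonneg_left habs2 (by positivity)
  refine habs.trans ?_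
  have hA : K * Real.exp (-r) * (12 * q / (l * (s - t)) ^ 2 + 4 / (l * (s - t)))
      = K / (l * (s - t)) * ((12 * r + 4) * Real.exp (-r)) := by
    rw [hrr]; field_simp
  have hB : K / (l * (s - t)) * ((12 / θ + 4) * Real.exp (-(q / (μ * (s - t)))))
      = μ / l ^ 2 * (12 / θ + 4) * (s - t)⁻¹ *
          (Real.sqrt 3 / (Real.pi * μ * (s - t) ^ 2) * Real.exp (-(q / (μ * (s - t))))) := by
    rw [hK]
    have hθ' : θ ≠ 0 := ne_of_gt hθ
    field_simp
  rw [hA, ← hB]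
  exact mul_le_mul_of_nonneg_left hkey (by positivity)
end

section
/- For every λ>0 and T>0 there exists a constant C>0 (depending only on λ and T) with the following property: for every 1-Lipschitz function φ:ℝ²→ℝ, all t<s with s−t ≤ T, and all (v,x)∈ℝ², the function Pφ(t,v,x) := ∫_{ℝ²} Γ^λ(t,v,x;s,v',x') φ(v',x') dv'dx' satisfies |∂_v Pφ(t,v,x)| ≤ C and |∂_{vv} Pφ(t,v,x)| ≤ C·(s−t)^{−1/2}. -/
open MeasureTheory

open MeasureTheory Real Set Filter

lemma int1D {b : ℝ} (hb : 0 < b) (n : ℕ) :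
    Integrable (fun x : ℝ => |x| ^ n * Real.exp (-b * x ^ 2)) := by
  have h := (integrable_rpow_mul_exp_neg_mul_sq hb
    (s := (n : ℝ)) (by exact_mod_cast lt_of_lt_of_le neg_one_lt_zero (Nat.cast_nonneg n))).abs
  refine h.congr (Filter.Eventually.of_forall fun x => ?_)
  show |x ^ (n:ℝ) * Real.exp (-b * x ^ 2)| = _
  rw [abs_mul, abs_of_pos (Real.exp_pos _), Real.rpow_natCast, abs_pow]

lemma gauss_abs_moment {b : ℝ} (hb : 0 < b) :
    ∫ x : ℝ, |x| * Real.exp (-b * x ^ 2) = b⁻¹ := by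
  have key : ∫ x in Ioi (0:ℝ), x * Real.exp (-b * x ^ 2)
      = 0 - (fun y : ℝ => -(2*b)⁻¹ * Real.exp (-b * y ^ 2)) 0 := by
    apply integral_Ioi_of_hasDerivAt_of_tendsto
      (f := fun y : ℝ => -(2*b)⁻¹ * Real.exp (-b * y ^ 2))
    · exact (by fun_prop : Continuous fun y : ℝ => -(2*b)⁻¹ * Real.exp (-b * y ^ 2)).continuousWithinAt
    · intro y _
      have h := (((hasDerivAt_pow 2 y).const_mul (-b)).exp.const_mul (-(2*b)⁻¹))
      refine h.congr_deriv ?_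
      field_simp
      ring
    · exact (integrable_mul_exp_neg_mul_sq hb).integrableOn
    · have h1 : Tendsto (fun y : ℝ => -b * y ^ 2) atTop atBot := by
        apply Tendsto.const_mul_atTop_of_neg (neg_lt_zero.mpr hb)
        exact tendsto_pow_atTop two_ne_zero
      have h2 := Real.tendsto_exp_atBot.comp h1
      simpa using h2.const_mul (-(2*b)⁻¹)
  have habs : ∫ x : ℝ, |x| * Real.exp (-b * x ^ 2)
      = 2 * ∫ x in Ioi (0:ℝ), x * Real.exp (-b * x ^ 2) := by
    rw [← integral_comp_abs (f := fun y => y * Real.exp (-b * y ^ 2))]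
    congr 1
    funext x
    rw [sq_abs]
  rw [habs, key]
  simp
  field_simp

lemma shear_int {f g : ℝ → ℝ} (hfc : Continuous f) (hgc : Continuous g)
    (hf : Integrable f) (hg : Integrable g) (k c₁ c₂ : ℝ) :
    Integrable (fun q : ℝ × ℝ => f (q.1 - k * q.2 - c₁) * g (q.2 - c₂)) := by
  have hmeas : AEStronglyMeasurable
      (fun q : ℝ × ℝ => f (q.1 - k * q.2 - c₁) * g (q.2 - c₂)) (volume : Measure (ℝ × ℝ)) := by
    apply Continuous.aestronglyMeasurable
    fun_prop
  rw [Measure.volume_eq_prod] at hmeas ⊢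
  rw [integrable_prod_iff' hmeas]
  constructor
  · refine Filter.Eventually.of_forall fun y => ?_
    have h1 : Integrable (fun x : ℝ => f (x - (k * y + c₁))) := hf.comp_sub_right _
    have h2 := h1.mul_const (g (y - c₂))
    refine h2.congr (Filter.Eventually.of_forall fun x => ?_)
    show f (x - (k * y + c₁)) * g (y - c₂) = f (x - k * y - c₁) * g (y - c₂)
    rw [sub_add_eq_sub_sub]
  · have heq : (fun y : ℝ => ∫ x : ℝ, ‖f (x - k * y - c₁) * g (y - c₂)‖)
        = fun y : ℝ => (∫ x : ℝ, |f x|) * |g (y - c₂)| := by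
      funext y
      have : ∀ x : ℝ, ‖f (x - k * y - c₁) * g (y - c₂)‖ = |f (x - (k * y + c₁))| * |g (y - c₂)| := by
        intro x; rw [Real.norm_eq_abs, abs_mul, sub_add_eq_sub_sub]
      simp_rw [this]
      rw [integral_mul_const, integral_sub_right_eq_self (fun x => |f x|) (k * y + c₁)]
    rw [heq]
    exact (hg.abs.comp_sub_right c₂).const_mul _

lemma shear_integral {f g : ℝ → ℝ} (hfc : Continuous f) (hgc : Continuous g)
    (hf : Integrable f) (hg : Integrable g) (k c₁ c₂ : ℝ) :
    ∫ q : ℝ × ℝ, f (q.1 - k * q.2 - c₁) * g (q.2 - c₂) = (∫ u : ℝ, f u) * ∫ b : ℝ, g b := by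
  have hI := shear_int hfc hgc hf hg k c₁ c₂
  rw [Measure.volume_eq_prod] at hI ⊢
  rw [integral_prod_symm _ hI]
  have h1 : ∀ y : ℝ, (∫ x : ℝ, f ((x, y).1 - k * (x, y).2 - c₁) * g ((x, y).2 - c₂))
      = (∫ u : ℝ, f u) * g (y - c₂) := by
    intro y
    show (∫ x : ℝ, f (x - k * y - c₁) * g (y - c₂)) = _
    rw [integral_mul_const]
    congr 1
    have : ∀ x : ℝ, f (x - k * y - c₁) = f (x - (k * y + c₁)) := fun x => by rw [sub_add_eq_sub_sub]
    simp_rw [this]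
    exact integral_sub_right_eq_self f (k * y + c₁)
  simp_rw [h1]
  rw [integral_const_mul]
  congr 1
  exact integral_sub_right_eq_self g c₂

lemma poly_absorb {γ : ℝ} (hγ : 0 < γ) (u : ℝ) :
    (1 + |u|) ^ 2 * Real.exp (-γ * u ^ 2) ≤ (2 + 4/γ) * Real.exp (-(γ/2) * u ^ 2) := by
  have he : Real.exp (-γ * u ^ 2) = Real.exp (-(γ/2) * u ^ 2) * Real.exp (-(γ/2) * u ^ 2) := by
    rw [← Real.exp_add]; ring_nf
  have h1 : (1 + |u|) ^ 2 ≤ 2 + 2 * u ^ 2 := by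
    nlinarith [sq_abs u, sq_nonneg (1 - |u|), abs_nonneg u]
  have h4 := Real.exp_pos (-(γ/2) * u ^ 2)
  have h2 : (γ/2) * u ^ 2 * Real.exp (-(γ/2) * u ^ 2) ≤ 1 := by
    have h3 := Real.add_one_le_exp ((γ/2) * u ^ 2)
    have h5 : Real.exp ((γ/2) * u ^ 2) * Real.exp (-(γ/2) * u ^ 2) = 1 := by
      rw [← Real.exp_add]; ring_nf; exact Real.exp_zero
    have h6 : 0 ≤ (Real.exp ((γ/2) * u ^ 2) - 1 - (γ/2) * u ^ 2) * Real.exp (-(γ/2) * u ^ 2) :=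
      mul_nonneg (by linarith) h4.le
    nlinarith [h6, h5, h4.le]
  have hE1 : Real.exp (-(γ/2) * u ^ 2) ≤ 1 :=
    Real.exp_le_one_iff.mpr (by nlinarith [sq_nonneg u])
  calc (1 + |u|) ^ 2 * Real.exp (-γ * u ^ 2)
      = (1 + |u|) ^ 2 * (Real.exp (-(γ/2) * u ^ 2) * Real.exp (-(γ/2) * u ^ 2)) := by rw [he]
    _ ≤ (2 + 2 * u ^ 2) * (Real.exp (-(γ/2) * u ^ 2) * Real.exp (-(γ/2) * u ^ 2)) := by
        have := mul_pos h4 h4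
        nlinarith [h1, this]
    _ = 2 * (Real.exp (-(γ/2) * u ^ 2) * Real.exp (-(γ/2) * u ^ 2))
        + (4/γ) * (((γ/2) * u ^ 2 * Real.exp (-(γ/2) * u ^ 2)) * Real.exp (-(γ/2) * u ^ 2)) := by
        field_simp; ring
    _ ≤ 2 * (1 * Real.exp (-(γ/2) * u ^ 2)) + (4/γ) * (1 * Real.exp (-(γ/2) * u ^ 2)) := by
        gcongr
    _ = (2 + 4/γ) * Real.exp (-(γ/2) * u ^ 2) := by ring

lemma exp_shift {γ δ : ℝ} (hγ : 0 < γ) {d : ℝ} (hd : |d| ≤ δ) (a : ℝ) :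
    Real.exp (-γ * (a + d) ^ 2) ≤ Real.exp (γ * δ ^ 2) * Real.exp (-(γ/2) * a ^ 2) := by
  rw [← Real.exp_add]
  apply Real.exp_le_exp.mpr
  have hd2 : d ^ 2 ≤ δ ^ 2 := by nlinarith [sq_abs d, abs_nonneg d]
  nlinarith [sq_nonneg (a + 2*d), hγ.le, mul_le_mul_of_nonneg_left hd2 hγ.le]

lemma abs_deriv_le_of_lip_s17 {F : ℝ → ℝ} {L : ℝ} (hL : 0 ≤ L)
    (h : ∀ a b : ℝ, |F a - F b| ≤ L * |a - b|) (v : ℝ) : |deriv F v| ≤ L := by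
  have hlip : LipschitzWith L.toNNReal F := by
    apply LipschitzWith.of_dist_le_mul
    intro a b
    rw [Real.dist_eq, Real.dist_eq, Real.coe_toNNReal L hL]
    exact h a b
  have h2 := norm_fderiv_le_of_lipschitz ℝ hlip (x₀ := v)
  calc |deriv F v| = ‖(fderiv ℝ F v) 1‖ := by rw [fderiv_apply_one_eq_deriv]; rfl
    _ ≤ ‖fderiv ℝ F v‖ * ‖(1:ℝ)‖ := ContinuousLinearMap.le_opNorm _ _
    _ ≤ L := by
        rw [norm_one, mul_one]
        exact h2.trans_eq (Real.coe_toNNReal L hL)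

/-- sheared product form of the kernel -/
noncomputable def Kq (l m : ℝ) (q : ℝ × ℝ) : ℝ :=
  Real.exp (-(2/(l*m)) * (q.1 - 3/(2*m) * q.2) ^ 2) *
    (Real.sqrt 3 / (Real.pi * l * m ^ 2) * Real.exp (-(3/(2*l*m^3)) * q.2 ^ 2))

noncomputable def Hq (l m : ℝ) (q : ℝ × ℝ) : ℝ :=
  (-2*q.1/(l*m) + 6*q.2/(l*m^2)) * Kq l m q

lemma Kq_cont (l m : ℝ) : Continuous (Kq l m) := by unfold Kq; fun_prop

lemma Hq_cont (l m : ℝ) : Continuous (Hq l m) := by unfold Hq Kq; fun_prop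

lemma Kq_pos {l m : ℝ} (hl : 0 < l) (hm : 0 < m) (q : ℝ × ℝ) : 0 < Kq l m q := by
  unfold Kq
  have : 0 < Real.sqrt 3 := Real.sqrt_pos.mpr (by norm_num)
  positivity

lemma Gam_eq_s17 {l m : ℝ} (hl : 0 < l) (hm : 0 < m) (t w x v' x' : ℝ) :
    Gam l t w x (t + m) v' x' = Kq l m (v' - w, x' - x - w * m) := by
  unfold Gam Kq
  have h1 : t + m - t = m := by ring
  rw [h1, mul_left_comm, ← Real.exp_add]
  congr 1
  field_simp
  ring

lemma kernel_hasDerivAt {l m : ℝ} (hl : 0 < l) (hm : 0 < m) (x c : ℝ) (p : ℝ × ℝ) (w : ℝ) :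
    HasDerivAt (fun w => Kq l m (p.1 - w, p.2 - x - w * m) * c)
      (Hq l m (p.1 - w, p.2 - x - w * m) * c) w := by
  have h1 : HasDerivAt (fun w : ℝ => p.1 - w) (-1) w := by
    simpa using (hasDerivAt_id w).const_sub p.1
  have h2 : HasDerivAt (fun w : ℝ => p.2 - x - w * m) (-m) w := by
    have := ((hasDerivAt_id w).mul_const m).const_sub (p.2 - x)
    simpa using this
  have hU : HasDerivAt (fun w : ℝ => (p.1 - w) - 3/(2*m) * (p.2 - x - w * m))
      (-1 - 3/(2*m) * (-m)) w := h1.sub (h2.const_mul _)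
  have hE1 := ((hU.pow 2).const_mul (-(2/(l*m)))).exp
  have hE2 := ((h2.pow 2).const_mul (-(3/(2*l*m^3)))).exp
  have hfull := (hE1.mul (hE2.const_mul (Real.sqrt 3 / (Real.pi * l * m ^ 2)))).mul_const c
  refine hfull.congr_deriv ?_
  simp only [Hq, Kq, Pi.pow_apply]
  have hπ := Real.pi_ne_zero
  have hm' := hm.ne'
  field_simp
  ring_nf
  field_simp
  ring
lemma le_of_sq_le_sq' {a b : ℝ} (ha : 0 ≤ a) (hb : 0 ≤ b) (h : a ^ 2 ≤ b ^ 2) : a ≤ b := by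
  calc a = Real.sqrt (a ^ 2) := (Real.sqrt_sq ha).symm
    _ ≤ Real.sqrt (b ^ 2) := Real.sqrt_le_sqrt h
    _ = b := Real.sqrt_sq hb

lemma bndA {l m : ℝ} (hl : 0 < l) (hm : 0 < m) :
    Real.sqrt 3 / (Real.pi * l * m ^ 2) * Real.sqrt (Real.pi / (3/(2*l*m^3)))
      ≤ 2 / Real.sqrt (l * m) := by
  have hπ := Real.pi_pos
  have harg : Real.pi / (3/(2*l*m^3)) = 2*Real.pi*l*m^3/3 := by field_simp
  rw [harg]
  apply le_of_sq_le_sq' (by positivity) (by positivity)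
  rw [mul_pow, div_pow, div_pow, Real.sq_sqrt (by norm_num : (0:ℝ) ≤ 3),
    Real.sq_sqrt (by positivity : (0:ℝ) ≤ 2*Real.pi*l*m^3/3), Real.sq_sqrt (by positivity : (0:ℝ) ≤ l*m)]
  rw [div_mul_eq_mul_div, div_le_div_iff₀ (by positivity) (by positivity)]
  nlinarith [Real.pi_gt_three, mul_pos hl hm, mul_pos (mul_pos hl hl) (mul_pos (mul_pos hm hm) (mul_pos hm hm)),
    mul_pos hπ (mul_pos (mul_pos hl hl) (mul_pos (mul_pos hm hm) (mul_pos hm hm)))]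

lemma bndB {l m : ℝ} (hl : 0 < l) (hm : 0 < m) :
    Real.sqrt (Real.pi / (2/(l*m))) * (3/(l*m^2) * (Real.sqrt 3 / (Real.pi * l * m ^ 2)) * (3/(2*l*m^3))⁻¹)
      ≤ 3 / Real.sqrt (l * m) := by
  have hπ := Real.pi_pos
  have harg : Real.pi / (2/(l*m)) = Real.pi*l*m/2 := by field_simp
  have harg2 : (3/(2*l*m^3) : ℝ)⁻¹ = 2*l*m^3/3 := by field_simp
  rw [harg, harg2]
  apply le_of_sq_le_sq' (by positivity) (by positivity)
  rw [mul_pow, div_pow, Real.sq_sqrt (by positivity : (0:ℝ) ≤ Real.pi*l*m/2),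
    Real.sq_sqrt (by positivity : (0:ℝ) ≤ l*m)]
  have hexp : (3/(l*m^2) * (Real.sqrt 3 / (Real.pi * l * m ^ 2)) * (2*l*m^3/3)) ^ 2
      = 4 * 3 / (Real.pi^2 * l^2 * m^2) := by
    rw [show (3/(l*m^2) * (Real.sqrt 3 / (Real.pi * l * m ^ 2)) * (2*l*m^3/3)) = 2 * Real.sqrt 3 / (Real.pi * l * m) by field_simp]
    rw [div_pow, mul_pow, Real.sq_sqrt (by norm_num : (0:ℝ) ≤ 3)]
    ring_nf
  rw [hexp]
  rw [show Real.pi*l*m/2 * (4*3/(Real.pi^2*l^2*m^2)) = 6/(Real.pi*l*m) by field_simp; ring]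
  rw [div_le_div_iff₀ (by positivity) (by positivity)]
  nlinarith [Real.pi_gt_three, mul_pos hl hm]
lemma master_int {F : ℝ × ℝ → ℝ} (hF : AEStronglyMeasurable F (volume : Measure (ℝ × ℝ)))
    {k c₁ c₂ M γ₁ γ₂ : ℝ} (hγ₁ : 0 < γ₁) (hγ₂ : 0 < γ₂)
    (hbd : ∀ q : ℝ × ℝ, |F q| ≤ M * ((1 + |q.1 - k * q.2 - c₁|) ^ 2 *
      ((1 + |q.2 - c₂|) ^ 2 *
        (Real.exp (-γ₁ * (q.1 - k * q.2 - c₁) ^ 2) * Real.exp (-γ₂ * (q.2 - c₂) ^ 2))))) :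
    Integrable F := by
  have hM : 0 ≤ M := by
    have h := (abs_nonneg (F (c₁ + k * c₂, c₂))).trans (hbd (c₁ + k * c₂, c₂))
    have hpos : (0:ℝ) < (1 + |(c₁ + k * c₂ : ℝ) - k * c₂ - c₁|) ^ 2 * ((1 + |c₂ - c₂|) ^ 2 *
        (Real.exp (-γ₁ * ((c₁ + k * c₂) - k * c₂ - c₁) ^ 2) * Real.exp (-γ₂ * (c₂ - c₂) ^ 2))) := by
      positivity
    nlinarith [h, hpos]
  refine Integrable.mono'
    (g := fun q : ℝ × ℝ => (M * ((2 + 4/γ₁) * (2 + 4/γ₂))) *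
      ((fun u => Real.exp (-(γ₁/2) * u ^ 2)) (q.1 - k * q.2 - c₁) *
       (fun b => Real.exp (-(γ₂/2) * b ^ 2)) (q.2 - c₂))) ?_ hF ?_
  · exact ((shear_int (by fun_prop) (by fun_prop) (integrable_exp_neg_mul_sq (half_pos hγ₁))
      (integrable_exp_neg_mul_sq (half_pos hγ₂)) k c₁ c₂).const_mul _)
  · refine Filter.Eventually.of_forall fun q => ?_
    rw [Real.norm_eq_abs]
    calc |F q| ≤ _ := hbd q
      _ = M * (((1 + |q.1 - k * q.2 - c₁|) ^ 2 * Real.exp (-γ₁ * (q.1 - k * q.2 - c₁) ^ 2)) *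
          ((1 + |q.2 - c₂|) ^ 2 * Real.exp (-γ₂ * (q.2 - c₂) ^ 2))) := by ring
      _ ≤ M * (((2 + 4/γ₁) * Real.exp (-(γ₁/2) * (q.1 - k * q.2 - c₁) ^ 2)) *
          ((2 + 4/γ₂) * Real.exp (-(γ₂/2) * (q.2 - c₂) ^ 2))) := by
          refine mul_le_mul_of_nonneg_left ?_ hM
          exact mul_le_mul (poly_absorb hγ₁ _) (poly_absorb hγ₂ _) (by positivity) (by positivity)
      _ = _ := by ring

lemma Kq_shape (l m : ℝ) : Kq l m = fun q : ℝ × ℝ =>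
    (fun u => Real.exp (-(2/(l*m)) * u ^ 2)) (q.1 - 3/(2*m) * q.2 - 0) *
    ((fun b => Real.sqrt 3 / (Real.pi * l * m ^ 2) * Real.exp (-(3/(2*l*m^3)) * b ^ 2)) (q.2 - 0)) := by
  funext q
  simp only [sub_zero]
  rfl

lemma Kq_integrable {l m : ℝ} (hl : 0 < l) (hm : 0 < m) : Integrable (Kq l m) := by
  rw [Kq_shape]
  exact shear_int (by fun_prop) (by fun_prop)
    (integrable_exp_neg_mul_sq (by positivity))
    ((integrable_exp_neg_mul_sq (by positivity)).const_mul _) _ _ _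

lemma Kq_integral_one {l m : ℝ} (hl : 0 < l) (hm : 0 < m) : ∫ q : ℝ × ℝ, Kq l m q = 1 := by
  have hπ := Real.pi_pos
  rw [Kq_shape]
  rw [shear_integral (by fun_prop) (by fun_prop)
    (integrable_exp_neg_mul_sq (by positivity))
    ((integrable_exp_neg_mul_sq (by positivity)).const_mul _) _ _ _]
  rw [integral_gaussian, integral_const_mul, integral_gaussian]
  rw [show Real.pi/(2/(l*m)) = Real.pi*l*m/2 by field_simp]
  rw [show Real.pi/(3/(2*l*m^3)) = 2*Real.pi*l*m^3/3 by field_simp]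
  have h3 : Real.sqrt (Real.pi*l*m/2) * Real.sqrt (2*Real.pi*l*m^3/3) = Real.pi*l*m^2/Real.sqrt 3 := by
    rw [← Real.sqrt_mul (by positivity)]
    rw [show (Real.pi*l*m/2) * (2*Real.pi*l*m^3/3) = (Real.pi*l*m^2)^2/3 by ring]
    rw [Real.sqrt_div' _ (by norm_num : (0:ℝ) ≤ 3), Real.sqrt_sq (by positivity)]
  calc Real.sqrt (Real.pi*l*m/2) * (Real.sqrt 3 / (Real.pi*l*m^2) * Real.sqrt (2*Real.pi*l*m^3/3))
      = (Real.sqrt (Real.pi*l*m/2) * Real.sqrt (2*Real.pi*l*m^3/3)) * (Real.sqrt 3 / (Real.pi*l*m^2)) := by ring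
    _ = (Real.pi*l*m^2/Real.sqrt 3) * (Real.sqrt 3 / (Real.pi*l*m^2)) := by rw [h3]
    _ = 1 := by
        rw [div_mul_div_comm, mul_comm]
        exact div_self (by positivity)

lemma Hmaj_shape (l m : ℝ) : (fun q : ℝ × ℝ =>
      (2/(l*m) * |q.1 - 3/(2*m) * q.2| + 3/(l*m^2) * |q.2|) * Kq l m q)
    = fun q : ℝ × ℝ =>
      (fun u => 2/(l*m) * (|u| * Real.exp (-(2/(l*m)) * u ^ 2))) (q.1 - 3/(2*m) * q.2 - 0) *
        ((fun b => Real.sqrt 3 / (Real.pi*l*m^2) * Real.exp (-(3/(2*l*m^3)) * b ^ 2)) (q.2 - 0))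
      + (fun u => Real.exp (-(2/(l*m)) * u ^ 2)) (q.1 - 3/(2*m) * q.2 - 0) *
        ((fun b => 3/(l*m^2) * (Real.sqrt 3/(Real.pi*l*m^2)) * (|b| * Real.exp (-(3/(2*l*m^3)) * b ^ 2))) (q.2 - 0)) := by
  funext q
  simp only [sub_zero]
  show _ = _ * (_ * Real.exp _) + Real.exp _ * _
  unfold Kq
  ring

lemma abs_mul_exp_int {b : ℝ} (hb : 0 < b) : Integrable (fun x : ℝ => |x| * Real.exp (-b * x ^ 2)) := by
  simpa using int1D hb 1

lemma Hmaj_int {l m : ℝ} (hl : 0 < l) (hm : 0 < m) :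
    Integrable (fun q : ℝ × ℝ =>
      (2/(l*m) * |q.1 - 3/(2*m) * q.2| + 3/(l*m^2) * |q.2|) * Kq l m q) := by
  rw [Hmaj_shape]
  refine Integrable.add ?_ ?_
  · exact shear_int (by fun_prop) (by fun_prop)
      ((abs_mul_exp_int (by positivity)).const_mul _)
      ((integrable_exp_neg_mul_sq (by positivity)).const_mul _) _ _ _
  · exact shear_int (by fun_prop) (by fun_prop)
      (integrable_exp_neg_mul_sq (by positivity))
      ((abs_mul_exp_int (by positivity)).const_mul _) _ _ _

lemma Hmaj_val {l m : ℝ} (hl : 0 < l) (hm : 0 < m) :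
    ∫ q : ℝ × ℝ, (2/(l*m) * |q.1 - 3/(2*m) * q.2| + 3/(l*m^2) * |q.2|) * Kq l m q
      ≤ 5 / Real.sqrt (l * m) := by
  have hπ := Real.pi_pos
  rw [Hmaj_shape]
  rw [integral_add
    (shear_int (by fun_prop) (by fun_prop)
      ((abs_mul_exp_int (by positivity)).const_mul _)
      ((integrable_exp_neg_mul_sq (by positivity)).const_mul _) _ _ _)
    (shear_int (by fun_prop) (by fun_prop)
      (integrable_exp_neg_mul_sq (by positivity))
      ((abs_mul_exp_int (by positivity)).const_mul _) _ _ _)]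
  rw [shear_integral (by fun_prop) (by fun_prop)
      ((abs_mul_exp_int (by positivity)).const_mul _)
      ((integrable_exp_neg_mul_sq (by positivity)).const_mul _) _ _ _,
    shear_integral (by fun_prop) (by fun_prop)
      (integrable_exp_neg_mul_sq (by positivity))
      ((abs_mul_exp_int (by positivity)).const_mul _) _ _ _]
  rw [integral_const_mul, integral_const_mul, integral_const_mul,
    gauss_abs_moment (by positivity : (0:ℝ) < 2/(l*m)),
    gauss_abs_moment (by positivity : (0:ℝ) < 3/(2*l*m^3)),
    integral_gaussian, integral_gaussian]
  have e1 : (2/(l*m) * (2/(l*m))⁻¹ : ℝ) = 1 := mul_inv_cancel₀ (by positivity)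
  rw [e1, one_mul]
  have hA := bndA hl hm
  have hB := bndB hl hm
  calc Real.sqrt 3 / (Real.pi*l*m^2) * Real.sqrt (Real.pi/(3/(2*l*m^3)))
        + Real.sqrt (Real.pi/(2/(l*m))) * (3/(l*m^2) * (Real.sqrt 3/(Real.pi*l*m^2)) * (3/(2*l*m^3))⁻¹)
      ≤ 2 / Real.sqrt (l*m) + 3 / Real.sqrt (l*m) := add_le_add hA hB
    _ = 5 / Real.sqrt (l*m) := by rw [← add_div]; norm_num
lemma deg_bound1 {A A₁ B u b : ℝ} (hA : 0 ≤ A) (hA₁ : 0 ≤ A₁) (hB : 0 ≤ B)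
    (hu : 0 ≤ u) (hb : 0 ≤ b) :
    A + A₁ * u + B * b ≤ (A + A₁ + B) * ((1 + u) * (1 + b)) := by
  nlinarith [mul_nonneg hu hb, mul_nonneg hA hu, mul_nonneg hA hb, mul_nonneg (mul_nonneg hA hu) hb,
    mul_nonneg hA₁ hb, mul_nonneg (mul_nonneg hA₁ hu) hb, mul_nonneg hB hu,
    mul_nonneg (mul_nonneg hB hu) hb]

lemma deg_bound2 {A A₁ B u b : ℝ} (hA : 0 ≤ A) (hA₁ : 0 ≤ A₁) (hB : 0 ≤ B)
    (hu : 0 ≤ u) (hb : 0 ≤ b) :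
    A + A₁ * u + B * b ≤ (A + A₁ + B) * ((1 + u) ^ 2 * (1 + b) ^ 2) := by
  have h1 := deg_bound1 hA hA₁ hB hu hb
  have h0 : (1:ℝ) ≤ (1 + u) * (1 + b) := by nlinarith [mul_nonneg hu hb]
  have h2 : (1 + u) * (1 + b) ≤ ((1 + u) * (1 + b)) ^ 2 := by nlinarith [h0]
  calc A + A₁ * u + B * b ≤ (A + A₁ + B) * ((1 + u) * (1 + b)) := h1
    _ ≤ (A + A₁ + B) * (((1 + u) * (1 + b)) ^ 2) := by
        refine mul_le_mul_of_nonneg_left h2 (by positivity)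
    _ = (A + A₁ + B) * ((1 + u) ^ 2 * (1 + b) ^ 2) := by ring

set_option maxHeartbeats 2000000 in
/-- Potential estimates: for a 1-Lipschitz `φ` (Euclidean norm on `ℝ²`) and
`0 < s − t ≤ T`, the function `Pφ(t,v,x) = ∫ Γ^λ(t,v,x;s,·)φ` has first
`v`-derivative bounded by `C` and second `v`-derivative bounded by
`C(s−t)^{−1/2}`, with `C = C(λ,T)`. -/
theorem stmt17 (l T : ℝ) (hl : 0 < l) (hT : 0 < T) :
    ∃ C : ℝ, 0 < C ∧ ∀ φ : ℝ × ℝ → ℝ,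
      (∀ z z' : ℝ × ℝ,
        |φ z - φ z'| ≤ Real.sqrt ((z.1 - z'.1) ^ 2 + (z.2 - z'.2) ^ 2)) →
      ∀ t s v x : ℝ, t < s → s - t ≤ T →
        |deriv (fun w => ∫ p : ℝ × ℝ, Gam l t w x s p.1 p.2 * φ p) v| ≤ C ∧
        |deriv (fun w =>
            deriv (fun w' => ∫ p : ℝ × ℝ, Gam l t w' x s p.1 p.2 * φ p) w) v|
          ≤ C * (Real.sqrt (s - t))⁻¹ := by
  have hsl : 0 < Real.sqrt l := Real.sqrt_pos.mpr hl
  refine ⟨(1 + T) * (1 + 5 / Real.sqrt l), by positivity, ?_⟩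
  intro φ hφ t s v x hts hsT
  set m := s - t with hmdef
  have hm : 0 < m := sub_pos.mpr hts
  have hγ₁ : (0:ℝ) < 2/(l*m) := by positivity
  have hγ₂ : (0:ℝ) < 3/(2*l*m^3) := by positivity
  have hk0 : (0:ℝ) ≤ 3/(2*m) := by positivity
  -- coordinatewise Lipschitz bound
  have hφd : ∀ z z' : ℝ × ℝ, |φ z - φ z'| ≤ |z.1 - z'.1| + |z.2 - z'.2| := by
    intro z z'
    refine (hφ z z').trans ?_
    have h1 : (z.1 - z'.1) ^ 2 + (z.2 - z'.2) ^ 2 ≤ (|z.1 - z'.1| + |z.2 - z'.2|) ^ 2 := by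
      nlinarith [sq_abs (z.1 - z'.1), sq_abs (z.2 - z'.2),
        mul_nonneg (abs_nonneg (z.1 - z'.1)) (abs_nonneg (z.2 - z'.2))]
    calc Real.sqrt ((z.1 - z'.1) ^ 2 + (z.2 - z'.2) ^ 2)
        ≤ Real.sqrt ((|z.1 - z'.1| + |z.2 - z'.2|) ^ 2) := Real.sqrt_le_sqrt h1
      _ = |z.1 - z'.1| + |z.2 - z'.2| := Real.sqrt_sq (by positivity)
  have hφc : Continuous φ := by
    have hlip : LipschitzWith 2 φ := by
      apply LipschitzWith.of_dist_le_mul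
      intro a b
      rw [Real.dist_eq]
      refine (hφd a b).trans ?_
      have h1 : |a.1 - b.1| ≤ dist a b := by
        rw [Prod.dist_eq]; exact le_max_of_le_left (by rw [Real.dist_eq])
      have h2 : |a.2 - b.2| ≤ dist a b := by
        rw [Prod.dist_eq]; exact le_max_of_le_right (by rw [Real.dist_eq])
      push_cast
      linarith
    exact hlip.continuous
  have hφg : ∀ p : ℝ × ℝ, |φ p| ≤ |φ (0, 0)| + (|p.1| + |p.2|) := by
    intro p
    have h := hφd p (0, 0)
    simp only [sub_zero] at h
    calc |φ p| = |φ (0,0) + (φ p - φ (0,0))| := by ring_nf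
      _ ≤ |φ (0,0)| + |φ p - φ (0,0)| := abs_add_le _ _
      _ ≤ _ := by linarith
  set a₀ : ℝ := |φ (0, 0)| with ha₀
  have ha₀0 : 0 ≤ a₀ := abs_nonneg _
  -- rewrite the kernel
  set G : ℝ → ℝ := fun w => ∫ p : ℝ × ℝ, Kq l m (p.1 - w, p.2 - x - w * m) * φ p with hGdef
  have hrw : (fun w => ∫ p : ℝ × ℝ, Gam l t w x s p.1 p.2 * φ p) = G := by
    have hs : s = t + m := by rw [hmdef]; ring
    funext w
    rw [hGdef]
    congr 1
    funext p
    rw [hs, Gam_eq_s17 hl hm]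
  -- translation identity
  have htrans : ∀ (Fk : ℝ × ℝ → ℝ) (w : ℝ),
      (∫ p : ℝ × ℝ, Fk (p.1 - w, p.2 - x - w * m) * φ p)
        = ∫ q : ℝ × ℝ, Fk q * φ (q + (w, x + w * m)) := by
    intro Fk w
    rw [← integral_add_right_eq_self (μ := (volume : Measure (ℝ × ℝ)))
      (fun p => Fk (p.1 - w, p.2 - x - w * m) * φ p) (w, x + w * m)]
    congr 1
    funext q
    obtain ⟨q1, q2⟩ := q
    show Fk (q1 + w - w, q2 + (x + w * m) - x - w * m) * φ _ = _
    have e1 : q1 + w - w = q1 := by ring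
    have e2 : q2 + (x + w * m) - x - w * m = q2 := by ring
    rw [e1, e2]
  -- integrability of the two key integrands
  have key1 : ∀ c : ℝ × ℝ, Integrable (fun q : ℝ × ℝ => Kq l m q * φ (q + c)) := by
    intro c
    apply master_int (k := 3/(2*m)) (c₁ := 0) (c₂ := 0) (γ₁ := 2/(l*m)) (γ₂ := 3/(2*l*m^3))
      (M := ((a₀ + |c.1| + |c.2|) + 1 + (1 + 3/(2*m))) * (Real.sqrt 3 / (Real.pi * l * m ^ 2)))
      (((Kq_cont l m).mul (hφc.comp (by fun_prop))).aestronglyMeasurable) hγ₁ hγ₂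
    intro q
    simp only [sub_zero]
    have hKpos := Kq_pos hl hm q
    have hφb : |φ (q + c)| ≤ (a₀ + |c.1| + |c.2|) + 1 * |q.1 - 3/(2*m) * q.2| + (1 + 3/(2*m)) * |q.2| := by
      have h1 := hφg (q + c)
      have h2 : |(q + c).1| ≤ |q.1| + |c.1| := by
        show |q.1 + c.1| ≤ _
        exact abs_add_le _ _
      have h3 : |(q + c).2| ≤ |q.2| + |c.2| := by
        show |q.2 + c.2| ≤ _
        exact abs_add_le _ _
      have h4 : |q.1| ≤ |q.1 - 3/(2*m) * q.2| + 3/(2*m) * |q.2| := by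
        calc |q.1| = |(q.1 - 3/(2*m) * q.2) + 3/(2*m) * q.2| := by ring_nf
          _ ≤ |q.1 - 3/(2*m) * q.2| + |3/(2*m) * q.2| := abs_add_le _ _
          _ = |q.1 - 3/(2*m) * q.2| + 3/(2*m) * |q.2| := by
              rw [abs_mul, abs_of_nonneg hk0]
      linarith
    have hdeg := deg_bound2 (by positivity : (0:ℝ) ≤ a₀ + |c.1| + |c.2|) (by norm_num : (0:ℝ) ≤ 1)
      (by positivity : (0:ℝ) ≤ 1 + 3/(2*m)) (abs_nonneg (q.1 - 3/(2*m) * q.2)) (abs_nonneg q.2)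
    calc |Kq l m q * φ (q + c)| = Kq l m q * |φ (q + c)| := by
          rw [abs_mul, abs_of_pos hKpos]
      _ ≤ Kq l m q * (((a₀ + |c.1| + |c.2|) + 1 + (1 + 3/(2*m))) *
          ((1 + |q.1 - 3/(2*m) * q.2|) ^ 2 * (1 + |q.2|) ^ 2)) :=
          mul_le_mul_of_nonneg_left (hφb.trans hdeg) hKpos.le
      _ = _ := by
          show (Real.exp (-(2/(l*m)) * (q.1 - 3/(2*m) * q.2) ^ 2) *
            (Real.sqrt 3 / (Real.pi * l * m ^ 2) * Real.exp (-(3/(2*l*m^3)) * q.2 ^ 2))) * _ = _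
          ring
  have key2 : ∀ c : ℝ × ℝ, Integrable (fun q : ℝ × ℝ => Hq l m q * φ (q + c)) := by
    intro c
    apply master_int (k := 3/(2*m)) (c₁ := 0) (c₂ := 0) (γ₁ := 2/(l*m)) (γ₂ := 3/(2*l*m^3))
      (M := ((2/(l*m) + 3/(l*m^2)) * ((a₀ + |c.1| + |c.2|) + 1 + (1 + 3/(2*m))))
        * (Real.sqrt 3 / (Real.pi * l * m ^ 2)))
      (((Hq_cont l m).mul (hφc.comp (by fun_prop))).aestronglyMeasurable) hγ₁ hγ₂
    intro q
    simp only [sub_zero]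
    have hKpos := Kq_pos hl hm q
    have hφb : |φ (q + c)| ≤ ((a₀ + |c.1| + |c.2|) + 1 + (1 + 3/(2*m))) *
        ((1 + |q.1 - 3/(2*m) * q.2|) * (1 + |q.2|)) := by
      have h2 : |(q + c).1| ≤ |q.1| + |c.1| := by
        show |q.1 + c.1| ≤ _; exact abs_add_le _ _
      have h3 : |(q + c).2| ≤ |q.2| + |c.2| := by
        show |q.2 + c.2| ≤ _; exact abs_add_le _ _
      have h4 : |q.1| ≤ |q.1 - 3/(2*m) * q.2| + 3/(2*m) * |q.2| := by
        calc |q.1| = |(q.1 - 3/(2*m) * q.2) + 3/(2*m) * q.2| := by ring_nf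
          _ ≤ |q.1 - 3/(2*m) * q.2| + |3/(2*m) * q.2| := abs_add_le _ _
          _ = |q.1 - 3/(2*m) * q.2| + 3/(2*m) * |q.2| := by rw [abs_mul, abs_of_nonneg hk0]
      have h5 : |φ (q + c)| ≤ (a₀ + |c.1| + |c.2|) + 1 * |q.1 - 3/(2*m) * q.2| + (1 + 3/(2*m)) * |q.2| := by
        have h1 := hφg (q + c)
        linarith
      refine h5.trans (deg_bound1 (by positivity) (by norm_num) (by positivity)
        (abs_nonneg _) (abs_nonneg _))
    have hcoef : |(-2*q.1/(l*m) + 6*q.2/(l*m^2))| ≤ (2/(l*m) + 3/(l*m^2)) *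
        ((1 + |q.1 - 3/(2*m) * q.2|) * (1 + |q.2|)) := by
      have h1 : (-2*q.1/(l*m) + 6*q.2/(l*m^2))
          = (-(2/(l*m))) * (q.1 - 3/(2*m) * q.2) + (3/(l*m^2)) * q.2 := by
        field_simp
        ring
      have h2 : |(-2*q.1/(l*m) + 6*q.2/(l*m^2))|
          ≤ 2/(l*m) * |q.1 - 3/(2*m) * q.2| + 3/(l*m^2) * |q.2| := by
        rw [h1]
        calc |(-(2/(l*m))) * (q.1 - 3/(2*m) * q.2) + (3/(l*m^2)) * q.2|
            ≤ |(-(2/(l*m))) * (q.1 - 3/(2*m) * q.2)| + |(3/(l*m^2)) * q.2| := abs_add_le _ _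
          _ = 2/(l*m) * |q.1 - 3/(2*m) * q.2| + 3/(l*m^2) * |q.2| := by
              rw [abs_mul, abs_mul, abs_neg, abs_of_pos hγ₁, abs_of_pos (by positivity : (0:ℝ) < 3/(l*m^2))]
      refine h2.trans ?_
      have := deg_bound1 (le_refl (0:ℝ)) hγ₁.le (by positivity : (0:ℝ) ≤ 3/(l*m^2))
        (abs_nonneg (q.1 - 3/(2*m) * q.2)) (abs_nonneg q.2)
      calc 2/(l*m) * |q.1 - 3/(2*m) * q.2| + 3/(l*m^2) * |q.2|
          = 0 + 2/(l*m) * |q.1 - 3/(2*m) * q.2| + 3/(l*m^2) * |q.2| := by ring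
        _ ≤ (0 + 2/(l*m) + 3/(l*m^2)) * ((1 + |q.1 - 3/(2*m) * q.2|) * (1 + |q.2|)) := this
        _ = (2/(l*m) + 3/(l*m^2)) * ((1 + |q.1 - 3/(2*m) * q.2|) * (1 + |q.2|)) := by ring
    calc |Hq l m q * φ (q + c)|
        = |(-2*q.1/(l*m) + 6*q.2/(l*m^2))| * Kq l m q * |φ (q + c)| := by
          show |(-2*q.1/(l*m) + 6*q.2/(l*m^2)) * Kq l m q * φ (q + c)| = _
          rw [abs_mul, abs_mul, abs_of_pos hKpos]
      _ ≤ ((2/(l*m) + 3/(l*m^2)) * ((1 + |q.1 - 3/(2*m) * q.2|) * (1 + |q.2|))) * Kq l m q *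
          (((a₀ + |c.1| + |c.2|) + 1 + (1 + 3/(2*m))) *
            ((1 + |q.1 - 3/(2*m) * q.2|) * (1 + |q.2|))) := by
          refine mul_le_mul (mul_le_mul_of_nonneg_right hcoef hKpos.le) hφb (abs_nonneg _) ?_
          positivity
      _ = _ := by
          show _ * (Real.exp (-(2/(l*m)) * (q.1 - 3/(2*m) * q.2) ^ 2) *
            (Real.sqrt 3 / (Real.pi * l * m ^ 2) * Real.exp (-(3/(2*l*m^3)) * q.2 ^ 2))) * _ = _
          ring
  -- Lipschitz bound for G
  have hKint := Kq_integrable hl hm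
  have LipG : ∀ w₁ w₂ : ℝ, |G w₁ - G w₂| ≤ (1 + T) * |w₁ - w₂| := by
    intro w₁ w₂
    have t1 : G w₁ = ∫ q : ℝ × ℝ, Kq l m q * φ (q + (w₁, x + w₁ * m)) := htrans (Kq l m) w₁
    have t2 : G w₂ = ∫ q : ℝ × ℝ, Kq l m q * φ (q + (w₂, x + w₂ * m)) := htrans (Kq l m) w₂
    rw [t1, t2, ← integral_sub (key1 _) (key1 _)]
    have hptw : ∀ q : ℝ × ℝ,
        |Kq l m q * φ (q + (w₁, x + w₁ * m)) - Kq l m q * φ (q + (w₂, x + w₂ * m))|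
        ≤ Kq l m q * ((1 + T) * |w₁ - w₂|) := by
      intro q
      have hKpos := Kq_pos hl hm q
      have h1 : |φ (q + (w₁, x + w₁ * m)) - φ (q + (w₂, x + w₂ * m))| ≤ (1 + T) * |w₁ - w₂| := by
        have h2 := hφd (q + (w₁, x + w₁ * m)) (q + (w₂, x + w₂ * m))
        have e1 : (q + (w₁, x + w₁ * m)).1 - (q + (w₂, x + w₂ * m)).1 = w₁ - w₂ := by
          show q.1 + w₁ - (q.1 + w₂) = _; ring
        have e2 : (q + (w₁, x + w₁ * m)).2 - (q + (w₂, x + w₂ * m)).2 = (w₁ - w₂) * m := by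
          show q.2 + (x + w₁ * m) - (q.2 + (x + w₂ * m)) = _; ring
        rw [e1, e2, abs_mul, abs_of_pos hm] at h2
        nlinarith [abs_nonneg (w₁ - w₂), h2, hsT]
      calc |Kq l m q * φ (q + (w₁, x + w₁ * m)) - Kq l m q * φ (q + (w₂, x + w₂ * m))|
          = Kq l m q * |φ (q + (w₁, x + w₁ * m)) - φ (q + (w₂, x + w₂ * m))| := by
            rw [← mul_sub, abs_mul, abs_of_pos hKpos]
        _ ≤ Kq l m q * ((1 + T) * |w₁ - w₂|) := mul_le_mul_of_nonneg_left h1 hKpos.le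
    calc |∫ q : ℝ × ℝ, (Kq l m q * φ (q + (w₁, x + w₁ * m)) - Kq l m q * φ (q + (w₂, x + w₂ * m)))|
        ≤ ∫ q : ℝ × ℝ, |Kq l m q * φ (q + (w₁, x + w₁ * m)) - Kq l m q * φ (q + (w₂, x + w₂ * m))| := by
          simpa [Real.norm_eq_abs] using norm_integral_le_integral_norm
            (fun q : ℝ × ℝ => Kq l m q * φ (q + (w₁, x + w₁ * m)) - Kq l m q * φ (q + (w₂, x + w₂ * m)))
      _ ≤ ∫ q : ℝ × ℝ, Kq l m q * ((1 + T) * |w₁ - w₂|) :=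
          integral_mono_of_nonneg (Filter.Eventually.of_forall fun q => abs_nonneg _)
            (hKint.mul_const _) (Filter.Eventually.of_forall hptw)
      _ = (1 + T) * |w₁ - w₂| := by
          rw [integral_mul_const, Kq_integral_one hl hm, one_mul]
  -- Lipschitz bound for the derivative integral
  have LipH : ∀ w₁ w₂ : ℝ,
      |(∫ q : ℝ × ℝ, Hq l m q * φ (q + (w₁, x + w₁ * m)))
        - ∫ q : ℝ × ℝ, Hq l m q * φ (q + (w₂, x + w₂ * m))|
        ≤ ((1 + T) * (5 / Real.sqrt (l * m))) * |w₁ - w₂| := by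
    intro w₁ w₂
    rw [← integral_sub (key2 _) (key2 _)]
    have hptw : ∀ q : ℝ × ℝ,
        |Hq l m q * φ (q + (w₁, x + w₁ * m)) - Hq l m q * φ (q + (w₂, x + w₂ * m))|
        ≤ ((2/(l*m) * |q.1 - 3/(2*m) * q.2| + 3/(l*m^2) * |q.2|) * Kq l m q)
            * ((1 + T) * |w₁ - w₂|) := by
      intro q
      have hKpos := Kq_pos hl hm q
      have h1 : |φ (q + (w₁, x + w₁ * m)) - φ (q + (w₂, x + w₂ * m))| ≤ (1 + T) * |w₁ - w₂| := by
        have h2 := hφd (q + (w₁, x + w₁ * m)) (q + (w₂, x + w₂ * m))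
        have e1 : (q + (w₁, x + w₁ * m)).1 - (q + (w₂, x + w₂ * m)).1 = w₁ - w₂ := by
          show q.1 + w₁ - (q.1 + w₂) = _; ring
        have e2 : (q + (w₁, x + w₁ * m)).2 - (q + (w₂, x + w₂ * m)).2 = (w₁ - w₂) * m := by
          show q.2 + (x + w₁ * m) - (q.2 + (x + w₂ * m)) = _; ring
        rw [e1, e2, abs_mul, abs_of_pos hm] at h2
        nlinarith [abs_nonneg (w₁ - w₂), h2, hsT]
      have hHabs : |Hq l m q| ≤ (2/(l*m) * |q.1 - 3/(2*m) * q.2| + 3/(l*m^2) * |q.2|) * Kq l m q := by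
        have hceq : (-2*q.1/(l*m) + 6*q.2/(l*m^2))
            = (-(2/(l*m))) * (q.1 - 3/(2*m) * q.2) + (3/(l*m^2)) * q.2 := by
          field_simp
          ring
        have hc : |(-2*q.1/(l*m) + 6*q.2/(l*m^2))|
            ≤ 2/(l*m) * |q.1 - 3/(2*m) * q.2| + 3/(l*m^2) * |q.2| := by
          rw [hceq]
          calc |(-(2/(l*m))) * (q.1 - 3/(2*m) * q.2) + (3/(l*m^2)) * q.2|
              ≤ |(-(2/(l*m))) * (q.1 - 3/(2*m) * q.2)| + |(3/(l*m^2)) * q.2| := abs_add_le _ _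
            _ = 2/(l*m) * |q.1 - 3/(2*m) * q.2| + 3/(l*m^2) * |q.2| := by
                rw [abs_mul, abs_mul, abs_neg, abs_of_pos hγ₁,
                  abs_of_pos (by positivity : (0:ℝ) < 3/(l*m^2))]
        calc |Hq l m q| = |(-2*q.1/(l*m) + 6*q.2/(l*m^2))| * Kq l m q := by
              show |(-2*q.1/(l*m) + 6*q.2/(l*m^2)) * Kq l m q| = _
              rw [abs_mul, abs_of_pos hKpos]
          _ ≤ _ := mul_le_mul_of_nonneg_right hc hKpos.le
      calc |Hq l m q * φ (q + (w₁, x + w₁ * m)) - Hq l m q * φ (q + (w₂, x + w₂ * m))|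
          = |Hq l m q| * |φ (q + (w₁, x + w₁ * m)) - φ (q + (w₂, x + w₂ * m))| := by
            rw [← mul_sub, abs_mul]
        _ ≤ ((2/(l*m) * |q.1 - 3/(2*m) * q.2| + 3/(l*m^2) * |q.2|) * Kq l m q)
              * ((1 + T) * |w₁ - w₂|) := by
            refine mul_le_mul hHabs h1 (abs_nonneg _) ?_
            positivity
    calc |∫ q : ℝ × ℝ, (Hq l m q * φ (q + (w₁, x + w₁ * m)) - Hq l m q * φ (q + (w₂, x + w₂ * m)))|
        ≤ ∫ q : ℝ × ℝ, |Hq l m q * φ (q + (w₁, x + w₁ * m)) - Hq l m q * φ (q + (w₂, x + w₂ * m))| := by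
          simpa [Real.norm_eq_abs] using norm_integral_le_integral_norm
            (fun q : ℝ × ℝ => Hq l m q * φ (q + (w₁, x + w₁ * m)) - Hq l m q * φ (q + (w₂, x + w₂ * m)))
      _ ≤ ∫ q : ℝ × ℝ, ((2/(l*m) * |q.1 - 3/(2*m) * q.2| + 3/(l*m^2) * |q.2|) * Kq l m q)
            * ((1 + T) * |w₁ - w₂|) :=
          integral_mono_of_nonneg (Filter.Eventually.of_forall fun q => abs_nonneg _)
            ((Hmaj_int hl hm).mul_const _) (Filter.Eventually.of_forall hptw)
      _ = (∫ q : ℝ × ℝ, (2/(l*m) * |q.1 - 3/(2*m) * q.2| + 3/(l*m^2) * |q.2|) * Kq l m q)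
            * ((1 + T) * |w₁ - w₂|) := integral_mul_const _ _
      _ ≤ (5 / Real.sqrt (l * m)) * ((1 + T) * |w₁ - w₂|) := by
          refine mul_le_mul_of_nonneg_right (Hmaj_val hl hm) ?_
          positivity
      _ = ((1 + T) * (5 / Real.sqrt (l * m))) * |w₁ - w₂| := by ring
  -- differentiation under the integral sign
  have hDG : ∀ w₀ : ℝ, HasDerivAt G (∫ p : ℝ × ℝ, Hq l m (p.1 - w₀, p.2 - x - w₀ * m) * φ p) w₀ := by
    intro w₀
    have hmeas : ∀ᶠ w in nhds w₀, AEStronglyMeasurable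
        (fun p : ℝ × ℝ => Kq l m (p.1 - w, p.2 - x - w * m) * φ p) (volume : Measure (ℝ × ℝ)) :=
      Filter.Eventually.of_forall fun w =>
        (((Kq_cont l m).comp (by fun_prop)).mul hφc).aestronglyMeasurable
    have hint : Integrable (fun p : ℝ × ℝ => Kq l m (p.1 - w₀, p.2 - x - w₀ * m) * φ p) := by
      have h := (key1 ((w₀ : ℝ), x + w₀ * m)).comp_sub_right ((w₀ : ℝ), x + w₀ * m)
      refine h.congr (Filter.Eventually.of_forall fun p => ?_)
      obtain ⟨p1, p2⟩ := p
      show Kq l m (p1 - w₀, p2 - (x + w₀ * m)) * φ (((p1, p2) : ℝ × ℝ) - (w₀, x + w₀ * m) + (w₀, x + w₀ * m))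
          = Kq l m (p1 - w₀, p2 - x - w₀ * m) * φ (p1, p2)
      rw [sub_add_cancel, show p2 - (x + w₀ * m) = p2 - x - w₀ * m from by ring]
    have h'meas : AEStronglyMeasurable
        (fun p : ℝ × ℝ => Hq l m (p.1 - w₀, p.2 - x - w₀ * m) * φ p) (volume : Measure (ℝ × ℝ)) :=
      (((Hq_cont l m).comp (by fun_prop)).mul hφc).aestronglyMeasurable
    have hdiff : ∀ᵐ p : ℝ × ℝ ∂(volume : Measure (ℝ × ℝ)), ∀ w ∈ Metric.ball w₀ 1,
        HasDerivAt (fun w => Kq l m (p.1 - w, p.2 - x - w * m) * φ p)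
          (Hq l m (p.1 - w, p.2 - x - w * m) * φ p) w :=
      Filter.Eventually.of_forall fun p w _ => kernel_hasDerivAt hl hm x (φ p) p w
    set cu : ℝ := w₀ - 3/(2*m) * x - 3/(2*m) * w₀ * m with hcu
    set cb : ℝ := x + w₀ * m with hcb
    set C₃ : ℝ := 8/(l*m) + 2/(l*m) + 9/(l*m^2) with hC₃
    set C₄ : ℝ := (a₀ + |w₀| + |cb|) + 1 + (3/(2*m) + 1) with hC₄
    set Mb : ℝ := (C₃ * C₄) * ((Real.sqrt 3 / (Real.pi * l * m^2)) *
      (Real.exp ((2/(l*m)) * (1/2:ℝ)^2) * Real.exp ((3/(2*l*m^3)) * m^2))) with hMb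
    have hC₃0 : 0 < C₃ := by rw [hC₃]; positivity
    have hC₄0 : 0 < C₄ := by rw [hC₄]; positivity
    have hMb0 : 0 ≤ Mb := by
      rw [hMb]
      have h3 : (0:ℝ) < Real.sqrt 3 := Real.sqrt_pos.mpr (by norm_num)
      positivity
    have hbound : ∀ᵐ p : ℝ × ℝ ∂(volume : Measure (ℝ × ℝ)), ∀ w ∈ Metric.ball w₀ 1,
        ‖Hq l m (p.1 - w, p.2 - x - w * m) * φ p‖ ≤
          Mb * ((1 + |p.1 - 3/(2*m) * p.2 - cu|) ^ 2 * ((1 + |p.2 - cb|) ^ 2 *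
            (Real.exp (-(2/(l*m)/2) * (p.1 - 3/(2*m) * p.2 - cu) ^ 2) *
             Real.exp (-(3/(2*l*m^3)/2) * (p.2 - cb) ^ 2)))) := by
      refine Filter.Eventually.of_forall fun p w hw => ?_
      have hd : |w - w₀| ≤ 1 := by
        rw [← Real.dist_eq]
        exact (Metric.mem_ball.mp hw).le
      set U0 : ℝ := p.1 - 3/(2*m) * p.2 - cu with hU0
      set B0 : ℝ := p.2 - cb with hB0
      have e_u : (p.1 - w) - 3/(2*m) * (p.2 - x - w * m) = U0 + (w - w₀) * (1/2) := by
        rw [hU0, hcu]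
        field_simp
        ring
      have e_b : p.2 - x - w * m = B0 + (-(w - w₀) * m) := by
        rw [hB0, hcb]; ring
      have hd1 : |(w - w₀) * (1/2)| ≤ 1/2 := by
        rw [abs_mul]
        calc |w - w₀| * |(1/2 : ℝ)| ≤ 1 * |(1/2 : ℝ)| :=
              mul_le_mul_of_nonneg_right hd (abs_nonneg _)
          _ = 1/2 := by norm_num
      have hd2 : |(-(w - w₀) * m)| ≤ m := by
        rw [abs_mul, abs_neg]
        calc |w - w₀| * |m| ≤ 1 * |m| := mul_le_mul_of_nonneg_right hd (abs_nonneg _)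
          _ = m := by rw [one_mul, abs_of_pos hm]
      have hK : Kq l m (p.1 - w, p.2 - x - w * m)
          ≤ ((Real.sqrt 3 / (Real.pi * l * m^2)) *
              (Real.exp ((2/(l*m)) * (1/2:ℝ)^2) * Real.exp ((3/(2*l*m^3)) * m^2))) *
            (Real.exp (-(2/(l*m)/2) * U0 ^ 2) * Real.exp (-(3/(2*l*m^3)/2) * B0 ^ 2)) := by
        have f1 : Real.exp (-(2/(l*m)) * ((p.1 - w) - 3/(2*m) * (p.2 - x - w * m)) ^ 2)
            ≤ Real.exp ((2/(l*m)) * (1/2:ℝ)^2) * Real.exp (-(2/(l*m)/2) * U0 ^ 2) := by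
          rw [e_u]
          exact exp_shift hγ₁ hd1 U0
        have f2 : Real.exp (-(3/(2*l*m^3)) * (p.2 - x - w * m) ^ 2)
            ≤ Real.exp ((3/(2*l*m^3)) * m^2) * Real.exp (-(3/(2*l*m^3)/2) * B0 ^ 2) := by
          rw [e_b]
          exact exp_shift hγ₂ hd2 B0
        have h3 : (0:ℝ) < Real.sqrt 3 := Real.sqrt_pos.mpr (by norm_num)
        calc Kq l m (p.1 - w, p.2 - x - w * m)
            = Real.exp (-(2/(l*m)) * ((p.1 - w) - 3/(2*m) * (p.2 - x - w * m)) ^ 2) *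
              (Real.sqrt 3 / (Real.pi * l * m ^ 2) *
                Real.exp (-(3/(2*l*m^3)) * (p.2 - x - w * m) ^ 2)) := rfl
          _ ≤ (Real.exp ((2/(l*m)) * (1/2:ℝ)^2) * Real.exp (-(2/(l*m)/2) * U0 ^ 2)) *
              (Real.sqrt 3 / (Real.pi * l * m ^ 2) *
                (Real.exp ((3/(2*l*m^3)) * m^2) * Real.exp (-(3/(2*l*m^3)/2) * B0 ^ 2))) := by
              refine mul_le_mul f1 (mul_le_mul_of_nonneg_left f2 (by positivity)) (by positivity) (by positivity)
          _ = _ := by ring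
      have hp1 : p.1 - w₀ = U0 + 3/(2*m) * B0 := by
        rw [hU0, hB0, hcu, hcb]
        field_simp
        ring
      have habs1 : |p.1 - w| ≤ |U0| + 3/(2*m) * |B0| + 1 := by
        have e3 : p.1 - w = (U0 + 3/(2*m) * B0) - (w - w₀) := by rw [← hp1]; ring
        rw [e3]
        calc |(U0 + 3/(2*m) * B0) - (w - w₀)| ≤ |U0 + 3/(2*m) * B0| + |w - w₀| := abs_sub _ _
          _ ≤ (|U0| + |3/(2*m) * B0|) + 1 := add_le_add (abs_add_le _ _) hd
          _ = |U0| + 3/(2*m) * |B0| + 1 := by rw [abs_mul, abs_of_nonneg hk0]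
      have habs2 : |p.2 - x - w * m| ≤ |B0| + m := by
        rw [e_b]
        calc |B0 + (-(w - w₀) * m)| ≤ |B0| + |(-(w - w₀) * m)| := abs_add_le _ _
          _ ≤ |B0| + m := add_le_add_right hd2 _
      have hcoefw : |(-2*(p.1 - w)/(l*m) + 6*(p.2 - x - w * m)/(l*m^2))|
          ≤ C₃ * ((1 + |U0|) * (1 + |B0|)) := by
        have hc1 : |(-2*(p.1 - w)/(l*m) + 6*(p.2 - x - w * m)/(l*m^2))|
            ≤ 2/(l*m) * |p.1 - w| + 6/(l*m^2) * |p.2 - x - w * m| := by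
          rw [show -2*(p.1 - w)/(l*m) + 6*(p.2 - x - w * m)/(l*m^2)
            = (-(2/(l*m))) * (p.1 - w) + (6/(l*m^2)) * (p.2 - x - w * m) from by field_simp]
          calc |(-(2/(l*m))) * (p.1 - w) + (6/(l*m^2)) * (p.2 - x - w * m)|
              ≤ |(-(2/(l*m))) * (p.1 - w)| + |(6/(l*m^2)) * (p.2 - x - w * m)| := abs_add_le _ _
            _ = 2/(l*m) * |p.1 - w| + 6/(l*m^2) * |p.2 - x - w * m| := by
                rw [abs_mul, abs_mul, abs_neg, abs_of_pos hγ₁,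
                  abs_of_pos (by positivity : (0:ℝ) < 6/(l*m^2))]
        have hc2 : 2/(l*m) * (|U0| + 3/(2*m) * |B0| + 1) + 6/(l*m^2) * (|B0| + m)
            = 8/(l*m) + 2/(l*m) * |U0| + 9/(l*m^2) * |B0| := by
          field_simp
          ring
        have hc3 : 2/(l*m) * |p.1 - w| + 6/(l*m^2) * |p.2 - x - w * m|
            ≤ 8/(l*m) + 2/(l*m) * |U0| + 9/(l*m^2) * |B0| := by
          rw [← hc2]
          refine add_le_add (mul_le_mul_of_nonneg_left habs1 hγ₁.le)
            (mul_le_mul_of_nonneg_left habs2 (by positivity))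
        refine hc1.trans (hc3.trans ?_)
        rw [hC₃]
        exact deg_bound1 (by positivity) hγ₁.le (by positivity) (abs_nonneg _) (abs_nonneg _)
      have hφw : |φ p| ≤ C₄ * ((1 + |U0|) * (1 + |B0|)) := by
        have h1 := hφg p
        have h2 : |p.1| ≤ |U0| + 3/(2*m) * |B0| + |w₀| := by
          have e4 : p.1 = (U0 + 3/(2*m) * B0) + w₀ := by rw [← hp1]; ring
          rw [e4]
          calc |(U0 + 3/(2*m) * B0) + w₀| ≤ |U0 + 3/(2*m) * B0| + |w₀| := abs_add_le _ _
            _ ≤ (|U0| + |3/(2*m) * B0|) + |w₀| := add_le_add_left (abs_add_le _ _) _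
            _ = |U0| + 3/(2*m) * |B0| + |w₀| := by rw [abs_mul, abs_of_nonneg hk0]
        have h3 : |p.2| ≤ |B0| + |cb| := by
          have e5 : p.2 = B0 + cb := by rw [hB0]; ring
          rw [e5]
          exact abs_add_le _ _
        have h4 : |φ p| ≤ ((a₀ + |w₀| + |cb|) + 1 * |U0| + (3/(2*m) + 1) * |B0|) := by
          nlinarith [h1, h2, h3]
        refine h4.trans ?_
        rw [hC₄]
        exact deg_bound1 (by positivity) (by norm_num) (by positivity) (abs_nonneg _) (abs_nonneg _)
      have hKpos2 := Kq_pos hl hm ((p.1 - w : ℝ), p.2 - x - w * m)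
      rw [Real.norm_eq_abs]
      calc |Hq l m (p.1 - w, p.2 - x - w * m) * φ p|
          = |(-2*(p.1 - w)/(l*m) + 6*(p.2 - x - w * m)/(l*m^2))| *
            Kq l m (p.1 - w, p.2 - x - w * m) * |φ p| := by
            show |(-2*(p.1 - w)/(l*m) + 6*(p.2 - x - w * m)/(l*m^2)) *
              Kq l m (p.1 - w, p.2 - x - w * m) * φ p| = _
            rw [abs_mul, abs_mul, abs_of_pos hKpos2]
        _ ≤ (C₃ * ((1 + |U0|) * (1 + |B0|))) *
            (((Real.sqrt 3 / (Real.pi * l * m^2)) *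
              (Real.exp ((2/(l*m)) * (1/2:ℝ)^2) * Real.exp ((3/(2*l*m^3)) * m^2))) *
             (Real.exp (-(2/(l*m)/2) * U0 ^ 2) * Real.exp (-(3/(2*l*m^3)/2) * B0 ^ 2))) *
            (C₄ * ((1 + |U0|) * (1 + |B0|))) := by
            refine mul_le_mul (mul_le_mul hcoefw hK hKpos2.le (by positivity)) hφw (abs_nonneg _) ?_
            have h3 : (0:ℝ) < Real.sqrt 3 := Real.sqrt_pos.mpr (by norm_num)
            positivity
        _ = Mb * ((1 + |U0|) ^ 2 * ((1 + |B0|) ^ 2 *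
            (Real.exp (-(2/(l*m)/2) * U0 ^ 2) * Real.exp (-(3/(2*l*m^3)/2) * B0 ^ 2)))) := by
            rw [hMb]
            ring
    have hbint : Integrable (fun p : ℝ × ℝ =>
        Mb * ((1 + |p.1 - 3/(2*m) * p.2 - cu|) ^ 2 * ((1 + |p.2 - cb|) ^ 2 *
          (Real.exp (-(2/(l*m)/2) * (p.1 - 3/(2*m) * p.2 - cu) ^ 2) *
           Real.exp (-(3/(2*l*m^3)/2) * (p.2 - cb) ^ 2))))) := by
      apply master_int (k := 3/(2*m)) (c₁ := cu) (c₂ := cb) (γ₁ := 2/(l*m)/2) (γ₂ := 3/(2*l*m^3)/2)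
        (M := Mb) (Continuous.aestronglyMeasurable (by fun_prop)) (half_pos hγ₁) (half_pos hγ₂)
      intro q
      rw [abs_of_nonneg (by positivity : (0:ℝ) ≤ Mb * _)]
    exact (hasDerivAt_integral_of_dominated_loc_of_deriv_le (Metric.ball_mem_nhds w₀ one_pos) hmeas hint h'meas hbound
      hbint hdiff).2
  -- assemble
  have hderivG : (fun w => deriv G w)
      = fun w => ∫ q : ℝ × ℝ, Hq l m q * φ (q + (w, x + w * m)) := by
    funext w
    rw [(hDG w).deriv]
    exact htrans (Hq l m) w
  have hsm : 0 < Real.sqrt m := Real.sqrt_pos.mpr hm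
  constructor
  · rw [hrw]
    refine (abs_deriv_le_of_lip_s17 (by positivity) LipG v).trans ?_
    nlinarith [hsl, hT, div_pos (by norm_num : (0:ℝ) < 5) hsl]
  · rw [hrw, hderivG]
    refine (abs_deriv_le_of_lip_s17 (by positivity) LipH v).trans ?_
    rw [Real.sqrt_mul hl.le m]
    rw [show (5 : ℝ)/(Real.sqrt l * Real.sqrt m) = (5/Real.sqrt l) * (Real.sqrt m)⁻¹ from by
      rw [div_mul_eq_div_div, div_eq_mul_inv]]
    calc (1 + T) * ((5/Real.sqrt l) * (Real.sqrt m)⁻¹)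
        = ((1 + T) * (5/Real.sqrt l)) * (Real.sqrt m)⁻¹ := by ring
      _ ≤ ((1 + T) * (1 + 5/Real.sqrt l)) * (Real.sqrt m)⁻¹ := by
          refine mul_le_mul_of_nonneg_right ?_ (inv_nonneg.mpr hsm.le)
          nlinarith [hT, hsl, div_pos (by norm_num : (0:ℝ) < 5) hsl]
end
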